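/- Every edge of G whose colour lies in R has at least one endpoint in T(V_reach) ∪ (V(M) ∖ V_reach), where T(V_reach) is the set of twins of vertices of V_reach. -/

import Mathlib

/-
A multigraph on vertex type `V` is given by an edge type `E` with two endpoint
maps `fst snd : E → V` (no loops: `fst e ≠ snd e`); parallel edges are allowed
since distinct elements of `E` may have the same endpoints.  A colouring
`col : E → C` by a set `C` of `n` colours is proper if any two distinct edges
sharing a vertex get distinct colours.
-/

attribute [local instance] Classical.propDecidable

/-- The set of endpoints of an edge. -/
def endpts {V E : Type*} [DecidableEq V] (fst snd : E → V) (e : E) : Finset V :=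
  {fst e, snd e}

/-- A set of edges is a rainbow matching: pairwise vertex-disjoint edges with
pairwise distinct colours. -/
def IsRainbowMatching {V E C : Type*} [DecidableEq V] (fst snd : E → V) (col : E → C)
    (S : Finset E) : Prop :=
  (∀ e ∈ S, ∀ f ∈ S, e ≠ f → endpts fst snd e ∩ endpts fst snd f = ∅) ∧
  (∀ e ∈ S, ∀ f ∈ S, col e = col f → e = f)

/-- `V(M)`: the set of vertices covered by a set of edges `M`. -/
def mVerts {V E : Type*} [DecidableEq V] (fst snd : E → V) (M : Finset E) : Finset V :=
  M.biUnion (endpts fst snd)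

/-- The set of colours used by a set of edges `M`. -/
def mCols {E C : Type*} [DecidableEq C] (col : E → C) (M : Finset E) : Finset C :=
  M.image col

/-- `C₀`: the set of colours not used by `M`. -/
def C0 {E C : Type*} [Fintype C] [DecidableEq C] (col : E → C) (M : Finset E) : Finset C :=
  Finset.univ \ mCols col M

/-- An edge is external if one endpoint is in `V(M)` and the other is outside `V(M)`. -/
def IsExternal {V E : Type*} [DecidableEq V] (fst snd : E → V) (M : Finset E) (e : E) : Prop :=
  (fst e ∈ mVerts fst snd M ∧ snd e ∉ mVerts fst snd M) ∨
  (fst e ∉ mVerts fst snd M ∧ snd e ∈ mVerts fst snd M)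

/-- The number of external `C₀`-edges incident to a vertex `v`. -/
noncomputable def extC0deg {V E C : Type*} [DecidableEq V] [Fintype E] [Fintype C]
    [DecidableEq C] (fst snd : E → V) (col : E → C) (M : Finset E) (v : V) : ℕ :=
  (Finset.univ.filter fun f : E =>
    IsExternal fst snd M f ∧ col f ∈ C0 col M ∧ v ∈ endpts fst snd f).card

/-- `E₀`: the edges of `M` having an endpoint (a possible tail) incident to at least
`α|C₀|` external `C₀`-edges. -/
noncomputable def E0 {V E C : Type*} [DecidableEq V] [Fintype E] [Fintype C] [DecidableEq C]
    (fst snd : E → V) (col : E → C) (M : Finset E) (α : ℝ) : Finset E :=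
  M.filter fun e => ∃ v ∈ endpts fst snd e,
    α * ((C0 col M).card : ℝ) ≤ (extC0deg fst snd col M v : ℝ)

/-- `F`: the set of flexible colours, i.e. the colours of the edges of `E₀`. -/
noncomputable def Fcols {V E C : Type*} [DecidableEq V] [Fintype E] [Fintype C] [DecidableEq C]
    (fst snd : E → V) (col : E → C) (M : Finset E) (α : ℝ) : Finset C :=
  mCols col (E0 fst snd col M α)

/-- A good external edge: an external edge `e` whose colour lies in `F` such that the
edge `m_{c(e)}` of `M` of the same colour is incident to at least `α|C₀|/2` external
`C₀`-edges sharing no endpoint with `e`. -/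
noncomputable def IsGood {V E C : Type*} [DecidableEq V] [Fintype E] [Fintype C] [DecidableEq C]
    (fst snd : E → V) (col : E → C) (M : Finset E) (α : ℝ) (e : E) : Prop :=
  IsExternal fst snd M e ∧ col e ∈ Fcols fst snd col M α ∧
  ∃ g ∈ M, col g = col e ∧
    α * ((C0 col M).card : ℝ) / 2 ≤
      ((Finset.univ.filter fun f : E => IsExternal fst snd M f ∧ col f ∈ C0 col M ∧
        (endpts fst snd f ∩ endpts fst snd g).Nonempty ∧
        endpts fst snd f ∩ endpts fst snd e = ∅).card : ℝ)

/-- The number of good external `F`-edges incident to a vertex `v`. -/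
noncomputable def goodDeg {V E C : Type*} [DecidableEq V] [Fintype E] [Fintype C] [DecidableEq C]
    (fst snd : E → V) (col : E → C) (M : Finset E) (α : ℝ) (v : V) : ℕ :=
  (Finset.univ.filter fun f : E => IsGood fst snd col M α f ∧ v ∈ endpts fst snd f).card

/-- `E₁`: the edges of `M` having an endpoint (a possible tail) incident to at least
`α|F|` good external `F`-edges. -/
noncomputable def E1 {V E C : Type*} [DecidableEq V] [Fintype E] [Fintype C] [DecidableEq C]
    (fst snd : E → V) (col : E → C) (M : Finset E) (α : ℝ) : Finset E :=
  M.filter fun e => ∃ v ∈ endpts fst snd e,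
    α * ((Fcols fst snd col M α).card : ℝ) ≤ (goodDeg fst snd col M α v : ℝ)

/-- Given a choice `tl` of tail for each edge, the corresponding head. -/
def hdOf {V E : Type*} [DecidableEq V] (fst snd : E → V) (tl : E → V) (e : E) : V :=
  if tl e = fst e then snd e else fst e

/-- The endpoint of the edge `f` other than `v` (for `v` an endpoint of `f`). -/
def other {V E : Type*} [DecidableEq V] (fst snd : E → V) (v : V) (f : E) : V :=
  if fst f = v then snd f else fst f

/-- The condition for a vertex `v` to be a possible tail at step `i > 1` of the
reachability algorithm: for some `0 < j < i`, the number of `R_j`-edges `v u` with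
`u ∈ V₀ ∪ V₁ ∪ ⋯ ∪ V_{i-1}` is at least `α|R_j|`. -/
noncomputable def reachCond {V E C : Type*} [DecidableEq V] [Fintype V] [Fintype E] [Fintype C]
    [DecidableEq C] (fst snd : E → V) (col : E → C) (M : Finset E)
    (Vs : ℕ → Finset V) (Rs : ℕ → Finset C) (α : ℝ) (i : ℕ) (v : V) : Prop :=
  ∃ j ∈ Finset.Ioo 0 i, α * ((Rs j).card : ℝ) ≤
    ((Finset.univ.filter fun f : E => v ∈ endpts fst snd f ∧ col f ∈ Rs j ∧
      other fst snd v f ∈ (Finset.univ \ mVerts fst snd M) ∪ (Finset.Ioo 0 i).biUnion Vs).card : ℝ)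

/-- The set `T(S)` of twins (matching partners under `M`) of the vertices of `S`. -/
def twins {V E : Type*} [DecidableEq V] (fst snd : E → V) (M : Finset E) (S : Finset V) :
    Finset V :=
  M.biUnion fun g => (if fst g ∈ S then {snd g} else ∅) ∪ (if snd g ∈ S then {fst g} else ∅)

/-!
Suppose an edge `e` with colour in `R` had both endpoints in `V₀ ∪ V_reach`.  Every edge `g` of
a layer `E_i` can be *freed* by a switching that replaces at most `3^i` edges of `M`, giving a
rainbow matching of the same size that uses neither the colour nor the head of `g`.  For `i = 1`
a good edge `f` at the tail of `g` takes over the colour of `m_{col f}`, which in turn is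
replaced by one of its many external `C₀`-edges.  For `i > 1` the reachability condition gives
an edge `f` at the tail of `g` with colour in an earlier `R_j`, ending in `V₀` or at the head of
an earlier layer edge, so it suffices to free at most two edges of earlier layers.  As `3^m` is
negligible against `k = 2^(20/ε)`, the switchings freeing `m_{col e}` and the matching edges
whose heads are endpoints of `e` can be made disjoint, and then `e` can be added to the
resulting matching, contradicting the maximality of `M`.
-/

open Finset

lemma Finset.exists_mem_not_of_card_filter_lt {α : Type*} {s : Finset α} {p : α → Prop}
    [DecidablePred p] (h : (s.filter p).card < s.card) : ∃ x ∈ s, ¬p x := by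
  by_contra! hp
  exact h.ne (congrArg card (filter_eq_self.2 hp))

lemma Finset.card_filter_or_le {α : Type*} [DecidableEq α] (s : Finset α) (p q : α → Prop)
    [DecidablePred p] [DecidablePred q] :
    (s.filter fun x => p x ∨ q x).card ≤ (s.filter p).card + (s.filter q).card :=
  (filter_or p q s).symm ▸ card_union_le _ _

lemma Finset.card_filter_le_mul_le_sum {ι : Type*} (s : Finset ι) (w : ι → ℕ) (τ : ℝ) :
    ((s.filter fun i => τ ≤ w i).card : ℝ) * τ ≤ ∑ i ∈ s, (w i : ℝ) := by
  rw [← nsmul_eq_mul]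
  exact (card_nsmul_le_sum _ _ _ fun i hi => (mem_filter.1 hi).2).trans
    (sum_le_sum_of_subset_of_nonneg (filter_subset _ _) fun _ _ _ => Nat.cast_nonneg _)

section Endpoints

variable {V E : Type*} [DecidableEq V] {fst snd : E → V}

lemma mem_endpts {f : E} {v : V} : v ∈ endpts fst snd f ↔ v = fst f ∨ v = snd f := by
  simp [endpts]

lemma fst_mem_endpts (f : E) : fst f ∈ endpts fst snd f := by simp [endpts]

lemma snd_mem_endpts (f : E) : snd f ∈ endpts fst snd f := by simp [endpts]

lemma endpts_nonempty (f : E) : (endpts fst snd f).Nonempty := ⟨_, fst_mem_endpts f⟩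

lemma card_endpts_le_two (f : E) : (endpts fst snd f).card ≤ 2 := card_le_two

lemma other_mem_endpts {f : E} {v : V} : other fst snd v f ∈ endpts fst snd f := by
  unfold other; split <;> simp [endpts]

lemma endpts_eq_pair_other {f : E} {v : V} (hv : v ∈ endpts fst snd f) :
    endpts fst snd f = {v, other fst snd v f} := by
  rcases mem_endpts.1 hv with rfl | rfl <;> by_cases h : fst f = snd f <;>
    simp_all [endpts, other, pair_comm]

lemma eq_or_eq_other_of_mem_endpts {f : E} {v w : V} (hv : v ∈ endpts fst snd f)
    (hw : w ∈ endpts fst snd f) : w = v ∨ w = other fst snd v f := by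
  simpa [endpts_eq_pair_other hv] using hw

lemma hdOf_mem_endpts (tl : E → V) (g : E) : hdOf fst snd tl g ∈ endpts fst snd g := by
  unfold hdOf; split <;> simp [endpts]

lemma tl_mem_endpts {tl : E → V} (htl : ∀ e : E, tl e = fst e ∨ tl e = snd e) (g : E) :
    tl g ∈ endpts fst snd g := by
  rcases htl g with h | h <;> simp [h, endpts]

lemma hdOf_ne_tl (hloop : ∀ e : E, fst e ≠ snd e) {tl : E → V}
    (htl : ∀ e : E, tl e = fst e ∨ tl e = snd e) (g : E) : hdOf fst snd tl g ≠ tl g := by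
  rcases htl g with h | h <;> simp [hdOf, h, hloop g, (hloop g).symm]

lemma mem_mVerts {S : Finset E} {v : V} :
    v ∈ mVerts fst snd S ↔ ∃ g ∈ S, v ∈ endpts fst snd g := by
  simp [mVerts]

lemma endpts_subset_mVerts {S : Finset E} {g : E} (hg : g ∈ S) :
    endpts fst snd g ⊆ mVerts fst snd S :=
  fun _ hv => mem_mVerts.2 ⟨g, hg, hv⟩

lemma mVerts_mono {S S' : Finset E} (h : S ⊆ S') : mVerts fst snd S ⊆ mVerts fst snd S' :=
  biUnion_subset_biUnion_of_subset_left _ h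

lemma card_mVerts_le (S : Finset E) : (mVerts fst snd S).card ≤ 2 * S.card :=
  (card_biUnion_le_card_mul _ _ 2 fun f _ => card_endpts_le_two f).trans_eq (mul_comm _ _)

lemma IsExternal.other_notMem_mVerts (hloop : ∀ e : E, fst e ≠ snd e) {M : Finset E} {f : E}
    {v : V} (hext : IsExternal fst snd M f) (hv : v ∈ endpts fst snd f)
    (hvM : v ∈ mVerts fst snd M) : other fst snd v f ∉ mVerts fst snd M := by
  rcases mem_endpts.1 hv with rfl | rfl <;> rcases hext with ⟨h1, h2⟩ | ⟨h1, h2⟩ <;>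
    simp_all [other, hloop f]

end Endpoints

def IsProperColouring {V E C : Type*} [DecidableEq V] (fst snd : E → V) (col : E → C) : Prop :=
  ∀ e f : E, e ≠ f → (endpts fst snd e ∩ endpts fst snd f).Nonempty → col e ≠ col f

section Matchings

variable {V E C : Type*} [DecidableEq V] {fst snd : E → V} {col : E → C} {M S T : Finset E}

lemma card_mVerts_of_pairwise_disjoint (hloop : ∀ e : E, fst e ≠ snd e)
    (hS : ∀ a ∈ S, ∀ b ∈ S, a ≠ b → endpts fst snd a ∩ endpts fst snd b = ∅) :
    (mVerts fst snd S).card = 2 * S.card := by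
  have hcard (f : E) : (endpts fst snd f).card = 2 := card_pair (hloop f)
  rw [mVerts, card_biUnion fun a ha b hb hab => disjoint_iff_inter_eq_empty.2 (hS a ha b hb hab),
    sum_congr rfl fun f _ => hcard f, sum_const, smul_eq_mul, mul_comm]

lemma notMem_of_forall_endpts_inter_eq_empty {e : E}
    (h : ∀ f ∈ S, endpts fst snd e ∩ endpts fst snd f = ∅) : e ∉ S := fun he =>
  (endpts_nonempty e).ne_empty (inter_self (endpts fst snd e) ▸ h e he)

namespace IsRainbowMatching

lemma eq_of_mem_endpts (hM : IsRainbowMatching fst snd col M) {g h : E} (hg : g ∈ M)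
    (hh : h ∈ M) {v : V} (hvg : v ∈ endpts fst snd g) (hvh : v ∈ endpts fst snd h) : g = h := by
  by_contra hne
  simpa [hM.1 g hg h hh hne] using mem_inter.2 ⟨hvg, hvh⟩

lemma eq_of_col_eq (hM : IsRainbowMatching fst snd col M) {g h : E} (hg : g ∈ M) (hh : h ∈ M)
    (hcol : col g = col h) : g = h :=
  hM.2 g hg h hh hcol

lemma mono (hM : IsRainbowMatching fst snd col M) (hS : S ⊆ M) : IsRainbowMatching fst snd col S :=
  ⟨fun a ha b hb => hM.1 a (hS ha) b (hS hb), fun a ha b hb => hM.2 a (hS ha) b (hS hb)⟩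

lemma notMem_mVerts (hM : IsRainbowMatching fst snd col M) (hS : S ⊆ M) {g : E} (hg : g ∈ M)
    (hgS : g ∉ S) {v : V} (hv : v ∈ endpts fst snd g) : v ∉ mVerts fst snd S := fun hvS => by
  obtain ⟨p, hp, hvp⟩ := mem_mVerts.1 hvS
  exact hgS (hM.eq_of_mem_endpts (hS hp) hg hvp hv ▸ hp)

lemma card_filter_meets_le_two (hM : IsRainbowMatching fst snd col M) (f : E) :
    (M.filter fun h => (endpts fst snd f ∩ endpts fst snd h).Nonempty).card ≤ 2 := by
  have hone (v : V) : (M.filter (v ∈ endpts fst snd ·)).card ≤ 1 := card_le_one.2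
    fun a ha b hb => hM.eq_of_mem_endpts (mem_filter.1 ha).1 (mem_filter.1 hb).1
      (mem_filter.1 ha).2 (mem_filter.1 hb).2
  have hsub : (M.filter fun h => (endpts fst snd f ∩ endpts fst snd h).Nonempty) ⊆
      M.filter (fst f ∈ endpts fst snd ·) ∪ M.filter (snd f ∈ endpts fst snd ·) := fun h hh => by
    obtain ⟨hhM, v, hv⟩ := mem_filter.1 hh
    obtain ⟨hvf, hvh⟩ := mem_inter.1 hv
    rcases mem_endpts.1 hvf with rfl | rfl <;> simp [hhM, hvh]
  have := (card_le_card hsub).trans (card_union_le _ _)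
  linarith [hone (fst f), hone (snd f)]

lemma singleton (f : E) : IsRainbowMatching fst snd col {f} := by
  constructor <;> simp

lemma union [DecidableEq E] (hS : IsRainbowMatching fst snd col S)
    (hT : IsRainbowMatching fst snd col T)
    (hvert : ∀ a ∈ S, ∀ b ∈ T, endpts fst snd a ∩ endpts fst snd b = ∅)
    (hcol : ∀ a ∈ S, ∀ b ∈ T, col a ≠ col b) : IsRainbowMatching fst snd col (S ∪ T) := by
  constructor
  · intro a ha b hb hab
    rcases mem_union.1 ha with ha | ha <;> rcases mem_union.1 hb with hb | hb
    · exact hS.1 a ha b hb hab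
    · exact hvert a ha b hb
    · rw [inter_comm]; exact hvert b hb a ha
    · exact hT.1 a ha b hb hab
  · intro a ha b hb hab
    rcases mem_union.1 ha with ha | ha <;> rcases mem_union.1 hb with hb | hb
    · exact hS.2 a ha b hb hab
    · exact absurd hab (hcol a ha b hb)
    · exact absurd hab.symm (hcol b hb a ha)
    · exact hT.2 a ha b hb hab

lemma insert [DecidableEq E] (hS : IsRainbowMatching fst snd col S) {e : E}
    (hvert : ∀ f ∈ S, endpts fst snd e ∩ endpts fst snd f = ∅) (hcol : ∀ f ∈ S, col e ≠ col f) :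
    IsRainbowMatching fst snd col (insert e S) := by
  simpa only [Finset.insert_eq] using (singleton e).union hS (by simpa using hvert)
    (by simpa using hcol)

lemma card_image_col [DecidableEq C] (hM : IsRainbowMatching fst snd col M) :
    (M.image col).card = M.card :=
  card_image_of_injOn fun a ha b hb hab => hM.2 a ha b hb hab

variable [Fintype C] [DecidableEq C]

lemma card_le (hM : IsRainbowMatching fst snd col M) : M.card ≤ Fintype.card C :=
  hM.card_image_col ▸ card_le_univ _

lemma card_C0 (hM : IsRainbowMatching fst snd col M) :
    ((C0 col M).card : ℝ) = Fintype.card C - M.card := by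
  rw [C0, card_sdiff_of_subset (subset_univ _), card_univ, mCols, hM.card_image_col,
    Nat.cast_sub hM.card_le]

end IsRainbowMatching

lemma col_notMem_C0 [Fintype C] [DecidableEq C] {g : E} (hg : g ∈ M) : col g ∉ C0 col M := by
  simpa [C0, mCols] using mem_image_of_mem col hg

end Matchings

section Counting

variable {V E C : Type*} [DecidableEq V] {fst snd : E → V} {col : E → C}

lemma IsProperColouring.card_filter_col_mem_le [DecidableEq C]
    (hproper : IsProperColouring fst snd col) {v : V}
    {S : Finset E} (hS : ∀ f ∈ S, v ∈ endpts fst snd f) (D : Finset C) :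
    (S.filter (col · ∈ D)).card ≤ D.card :=
  card_le_card_of_injOn col (fun f hf => (mem_filter.1 hf).2) fun f hf g hg hfg => by
    by_contra hne
    exact hproper f g hne ⟨v, mem_inter.2 ⟨hS f (mem_filter.1 hf).1, hS g (mem_filter.1 hg).1⟩⟩ hfg

lemma IsProperColouring.card_le [Fintype C] [DecidableEq C]
    (hproper : IsProperColouring fst snd col) {v : V}
    {S : Finset E} (hS : ∀ f ∈ S, v ∈ endpts fst snd f) : S.card ≤ Fintype.card C := by
  simpa using hproper.card_filter_col_mem_le hS univ

lemma card_filter_other_mem_le [Fintype E] {b : ℝ}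
    (hmult : ∀ u v : V, ((univ.filter fun e : E => endpts fst snd e = {u, v}).card : ℝ) ≤ b)
    {t : V} {S : Finset E} (hS : ∀ f ∈ S, t ∈ endpts fst snd f) (W : Finset V) :
    ((S.filter (other fst snd t · ∈ W)).card : ℝ) ≤ W.card * b := by
  have hsub : S.filter (other fst snd t · ∈ W) ⊆
      W.biUnion fun w => univ.filter fun f => endpts fst snd f = {t, w} := fun f hf => by
    rw [mem_filter] at hf
    exact mem_biUnion.2 ⟨_, hf.2, mem_filter.2 ⟨mem_univ _, endpts_eq_pair_other (hS f hf.1)⟩⟩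
  calc ((S.filter (other fst snd t · ∈ W)).card : ℝ)
      ≤ ∑ w ∈ W, ((univ.filter fun f => endpts fst snd f = {t, w}).card : ℝ) := by
        exact_mod_cast (card_le_card hsub).trans card_biUnion_le
    _ ≤ W.card * b := by
        simpa using sum_le_sum fun w (_ : w ∈ W) => hmult t w

end Counting

section LocalCounting

variable {V E C : Type*} [DecidableEq V] [DecidableEq C] {fst snd : E → V} {col : E → C}

lemma IsProperColouring.card_filter_col_mem_le_two_mul (hproper : IsProperColouring fst snd col)
    {g : E} {S : Finset E} (hS : ∀ f ∈ S, (endpts fst snd f ∩ endpts fst snd g).Nonempty)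
    (D : Finset C) : (S.filter (col · ∈ D)).card ≤ 2 * D.card := by
  have hsub : S.filter (col · ∈ D) ⊆
      ((S.filter (fst g ∈ endpts fst snd ·)).filter (col · ∈ D)) ∪
        ((S.filter (snd g ∈ endpts fst snd ·)).filter (col · ∈ D)) := fun f hf => by
    obtain ⟨hfS, hfD⟩ := mem_filter.1 hf
    obtain ⟨v, hv⟩ := hS f hfS
    obtain ⟨hvf, hvg⟩ := mem_inter.1 hv
    rcases mem_endpts.1 hvg with rfl | rfl <;> simp [hfS, hfD, hvf]
  refine (card_le_card hsub).trans ((card_union_le _ _).trans ?_)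
  have h₁ := hproper.card_filter_col_mem_le (S := S.filter (fst g ∈ endpts fst snd ·))
    (fun f hf => (mem_filter.1 hf).2) D
  have h₂ := hproper.card_filter_col_mem_le (S := S.filter (snd g ∈ endpts fst snd ·))
    (fun f hf => (mem_filter.1 hf).2) D
  omega

lemma IsProperColouring.card_filter_exists_mem_endpts_le [Fintype E] [Fintype C]
    (hproper : IsProperColouring fst snd col) (W : Finset V) :
    (univ.filter fun f : E => ∃ w ∈ W, w ∈ endpts fst snd f).card ≤ W.card * Fintype.card C := by
  have hsub : (univ.filter fun f : E => ∃ w ∈ W, w ∈ endpts fst snd f) ⊆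
      W.biUnion fun w => univ.filter (w ∈ endpts fst snd ·) := fun f hf => by
    obtain ⟨w, hw, hwf⟩ := (mem_filter.1 hf).2
    exact mem_biUnion.2 ⟨w, hw, mem_filter.2 ⟨mem_univ _, hwf⟩⟩
  exact (card_le_card hsub).trans (card_biUnion_le_card_mul _ _ _ fun w _ =>
    hproper.card_le fun f hf => (mem_filter.1 hf).2)

/-- Each edge `f'` meets at most two edges of `M`, and each of those has the colour of at most
one edge at `t`. -/
lemma sum_card_filter_meets_le {M : Finset E} (hproper : IsProperColouring fst snd col)
    (hM : IsRainbowMatching fst snd col M) {t : V} {S : Finset E}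
    (hS : ∀ f ∈ S, t ∈ endpts fst snd f) (A : Finset E) :
    ∑ f ∈ S, (A.filter fun f' => ∃ h ∈ M, col h = col f ∧
      (endpts fst snd f' ∩ endpts fst snd h).Nonempty).card ≤ 2 * A.card := by
  have hswap := sum_card_bipartiteAbove_eq_sum_card_bipartiteBelow (s := S) (t := A)
    fun f f' => ∃ h ∈ M, col h = col f ∧ (endpts fst snd f' ∩ endpts fst snd h).Nonempty
  simp only [bipartiteAbove, bipartiteBelow] at hswap
  rw [hswap, mul_comm, ← smul_eq_mul]
  refine sum_le_card_nsmul _ _ _ fun f' _ => ?_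
  refine (card_le_card_of_injOn col (t := (M.filter fun h =>
    (endpts fst snd f' ∩ endpts fst snd h).Nonempty).image col) (fun f hf => ?_)
    fun f₁ hf₁ f₂ hf₂ hcol => ?_).trans (card_image_le.trans (hM.card_filter_meets_le_two f'))
  · obtain ⟨h, hhM, hhf, hmeet⟩ := (mem_filter.1 hf).2
    exact mem_image.2 ⟨h, mem_filter.2 ⟨hhM, hmeet⟩, hhf⟩
  · by_contra hne
    exact hproper f₁ f₂ hne ⟨t, mem_inter.2 ⟨hS f₁ (mem_filter.1 hf₁).1,
      hS f₂ (mem_filter.1 hf₂).1⟩⟩ hcol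

end LocalCounting

section Numerics

lemma div_pow_sixteen_le_two_rpow {x : ℝ} (hx : 0 ≤ x) : (x / 24) ^ 16 ≤ (2 : ℝ) ^ x := by
  have h1 : x / 24 ≤ Real.log 2 * x / 16 + 1 := by nlinarith [Real.log_two_gt_d9]
  calc (x / 24) ^ 16 ≤ Real.exp (Real.log 2 * x / 16) ^ 16 :=
        pow_le_pow_left₀ (by positivity) (h1.trans (Real.add_one_le_exp _)) 16
    _ = (2 : ℝ) ^ x := by
        rw [← Real.exp_nat_mul, Real.rpow_def_of_pos two_pos]; congr 1; push_cast; ring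

lemma cube_le_two_rpow_half {u : ℝ} (hu : 1000 ≤ u) : 2419200 * u ^ 3 ≤ (2 : ℝ) ^ (u / 2) := by
  refine le_trans ?_ (div_pow_sixteen_le_two_rpow (by positivity))
  have hu13 : (1000 : ℝ) ^ 13 ≤ u ^ 13 := pow_le_pow_left₀ (by norm_num) hu 13
  rw [show (u / 2 / 24) ^ 16 = u ^ 3 * u ^ 13 / 48 ^ 16 by ring, le_div_iff₀ (by positivity)]
  nlinarith [pow_pos (show (0 : ℝ) < u by linarith) 3]

lemma three_pow_le_two_rpow (m : ℕ) : (3 : ℝ) ^ m ≤ (2 : ℝ) ^ (13 / 8 * (m : ℝ)) := by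
  have h3 : (3 : ℝ) ≤ (2 : ℝ) ^ ((13 : ℝ) / 8) := by
    refine (pow_le_pow_iff_left₀ (by norm_num) (by positivity) (by norm_num : 8 ≠ 0)).1 ?_
    rw [← Real.rpow_natCast ((2 : ℝ) ^ ((13 : ℝ) / 8)) 8, ← Real.rpow_mul (by norm_num)]
    norm_num
  calc (3 : ℝ) ^ m ≤ ((2 : ℝ) ^ ((13 : ℝ) / 8)) ^ m := pow_le_pow_left₀ (by norm_num) h3 m
    _ = (2 : ℝ) ^ (13 / 8 * (m : ℝ)) := by rw [← Real.rpow_natCast, ← Real.rpow_mul (by norm_num)]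

/-- `k = 2^(20/ε)` beats `3^m` for `m ≤ 12/ε` by a polynomial factor in `1/ε`: split
`20/ε = 39/(2ε) + 1/(2ε)`.  The constant is `14 · 12³ · 100`, to be matched with `α³k/100` for
`α = ε/12`. -/
lemma three_pow_mul_le_of_eq_two_rpow {ε k : ℝ} (hε0 : 0 < ε) (hε1 : ε < 1 / 1000)
    (hk : k = (2 : ℝ) ^ (20 / ε)) {m : ℕ} (hm : m * ε ≤ 12) :
    3 ^ m * (2419200 * (1 / ε) ^ 3) ≤ k := by
  set u := 1 / ε
  have hu : 1000 ≤ u := by rw [le_div_iff₀ hε0]; linarith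
  have hmu : (m : ℝ) ≤ 12 * u := by rw [mul_one_div, le_div_iff₀ hε0]; linarith
  have hsplit : k = (2 : ℝ) ^ (39 / 2 * u) * (2 : ℝ) ^ (u / 2) := by
    rw [hk, ← Real.rpow_add two_pos]; congr 1; simp only [u]; ring
  have h3 : (3 : ℝ) ^ m ≤ (2 : ℝ) ^ (39 / 2 * u) :=
    (three_pow_le_two_rpow m).trans (Real.rpow_le_rpow_of_exponent_le one_le_two (by linarith))
  rw [hsplit]
  exact mul_le_mul h3 (cube_le_two_rpow_half hu) (by positivity) (by positivity)

lemma eight_le_sq_mul {ε k α : ℝ} (hε0 : 0 < ε) (hε1 : ε < 1 / 1000)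
    (hk : k = (2 : ℝ) ^ (20 / ε)) (hα : α = ε / 12) : 8 ≤ α ^ 2 * k := by
  have hk' := three_pow_mul_le_of_eq_two_rpow hε0 hε1 hk (m := 0) (by simp)
  have h : α ^ 2 * (2419200 * (1 / ε) ^ 3) = 16800 / ε := by
    rw [hα]; field_simp; ring
  have h2 : 8 ≤ 16800 / ε := by rw [le_div_iff₀ hε0]; linarith
  nlinarith [mul_le_mul_of_nonneg_left (by simpa using hk') (sq_nonneg α)]

lemma two_add_nine_mul_three_pow_le {ε k α : ℝ} (hε0 : 0 < ε) (hε1 : ε < 1 / 1000)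
    (hk : k = (2 : ℝ) ^ (20 / ε)) (hα : α = ε / 12) {m : ℕ} (hm : m * α ≤ 1) :
    2 + 9 * 3 ^ m ≤ α ^ 3 * k / 100 := by
  have hk' := three_pow_mul_le_of_eq_two_rpow hε0 hε1 hk (m := m) (by rw [hα] at hm; linarith)
  have h : α ^ 3 * (3 ^ m * (2419200 * (1 / ε) ^ 3)) / 100 = 14 * 3 ^ m := by
    rw [hα]; field_simp; ring
  have h3 : (1 : ℝ) ≤ 3 ^ m := one_le_pow₀ (by norm_num)
  have hα0 : 0 ≤ α ^ 3 := by rw [hα]; positivity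
  nlinarith [mul_le_mul_of_nonneg_left hk' hα0]

lemma add_add_mul_lt_sq_mul {α k n : ℝ} (hα0 : 0 < α) (hα1 : α ≤ 1) (hk : 8 ≤ α ^ 2 * k)
    (hn : k ^ 2 < n) :
    α ^ 3 * k / 100 + 1 + (2 * (α ^ 3 * k / 100) + 1) * (n / k) < α ^ 2 * n := by
  have hk0 : 0 < k := by nlinarith
  set x := n / k
  have hx : k ≤ x := by rw [le_div_iff₀ hk0]; nlinarith
  have hn' : n = k * x := by simp only [x]; field_simp
  have hα3 : α ^ 3 * k ≤ α ^ 2 * k := by nlinarith [sq_nonneg α]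
  have hx1 : 1 ≤ x := by nlinarith
  have h1 : α ^ 3 * k * x ≤ α ^ 2 * k * x := mul_le_mul_of_nonneg_right hα3 (by linarith)
  have h2 : 8 * x ≤ α ^ 2 * k * x := mul_le_mul_of_nonneg_right hk (by linarith)
  rw [hn']
  nlinarith

lemma add_add_mul_add_div_lt_five_mul {α k n Θ : ℝ} (hα : 0 < α) (hk : 0 < k) (hn : 0 < n)
    (hΘ : Θ = α ^ 3 * k / 100) (h : Θ + 1 + (2 * Θ + 1) * (n / k) < α ^ 2 * n) :
    Θ + 1 + Θ * (n / k) + 8 * Θ * n / (α * k) < 5 * (α ^ 2 * n) := by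
  have h8 : 8 * Θ * n / (α * k) = 8 / 100 * (α ^ 2 * n) := by rw [hΘ]; field_simp
  have hΘ0 : 0 ≤ Θ * (n / k) := by rw [hΘ]; positivity
  have hnk : 0 ≤ n / k := by positivity
  nlinarith [sq_nonneg α, mul_pos (pow_pos hα 2) hn]

lemma param_bounds {ε k α : ℝ} {n : ℕ} (hε0 : 0 < ε) (hε1 : ε < 1 / 1000)
    (hk : k = (2 : ℝ) ^ (20 / ε)) (hα : α = ε / 12) (hn : (n : ℝ) > k ^ 2) :
    0 < α ∧ 0 < k ∧ 0 < n ∧ 2 * (α ^ 3 * k / 100) ≤ α * k / 4 ∧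
      α ^ 3 * k / 100 + 1 + (2 * (α ^ 3 * k / 100) + 1) * (n / k) < α ^ 2 * n ∧
      α ^ 3 * k / 100 + 1 + α ^ 3 * k / 100 * (n / k) + 8 * (α ^ 3 * k / 100) * n / (α * k) <
        5 * (α ^ 2 * n) := by
  have hk0 : 0 < k := hk ▸ by positivity
  have hn0 : (0 : ℝ) < n := by nlinarith
  have hα0 : 0 < α := by rw [hα]; positivity
  have hα1 : α ≤ 1 := by rw [hα]; linarith
  have hΘ := add_add_mul_lt_sq_mul hα0 hα1 (eight_le_sq_mul hε0 hε1 hk hα) hn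
  have hΘk : 2 * (α ^ 3 * k / 100) ≤ α * k / 4 := by
    have := mul_le_mul_of_nonneg_right (pow_le_one₀ (n := 2) hα0.le hα1) (mul_pos hα0 hk0).le
    nlinarith
  exact ⟨hα0, hk0, by exact_mod_cast hn0, hΘk, hΘ,
    add_add_mul_add_div_lt_five_mul hα0 hk0 hn0 rfl hΘ⟩

end Numerics

section FlexibleColours

variable {V E C : Type*} [DecidableEq V] [Fintype C] [DecidableEq C]
  {fst snd : E → V} {col : E → C} {M : Finset E}

lemma exists_mem_mVerts_of_col_mem_C0 [DecidableEq E] (hM : IsRainbowMatching fst snd col M)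
    (hMmax : ∀ S : Finset E, IsRainbowMatching fst snd col S → S.card ≤ M.card) {f : E}
    (hf : col f ∈ C0 col M) : ∃ v ∈ endpts fst snd f, v ∈ mVerts fst snd M := by
  by_contra! hout
  have hvert : ∀ g ∈ M, endpts fst snd f ∩ endpts fst snd g = ∅ := fun g hg =>
    eq_empty_of_forall_notMem fun v hv =>
      hout v (mem_inter.1 hv).1 (endpts_subset_mVerts hg (mem_inter.1 hv).2)
  have hcol : ∀ g ∈ M, col f ≠ col g := fun g hg h => col_notMem_C0 hg (h ▸ hf)
  have := hMmax _ (hM.insert hvert hcol)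
  rw [card_insert_of_notMem (notMem_of_forall_endpts_inter_eq_empty hvert)] at this
  omega

/-- An unused colour has no edge inside `V₀`, and its edges inside `V(M)` form a matching
there, so all but `|M|` of its edges are external. -/
lemma card_col_sub_card_le_card_external [Fintype E] [DecidableEq E]
    (hloop : ∀ e : E, fst e ≠ snd e) (hproper : IsProperColouring fst snd col)
    (hM : IsRainbowMatching fst snd col M)
    (hMmax : ∀ S : Finset E, IsRainbowMatching fst snd col S → S.card ≤ M.card) {c : C}
    (hc : c ∈ C0 col M) :
    ((univ.filter fun f : E => col f = c).card : ℝ) - M.card ≤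
      ((univ.filter fun f : E => col f = c ∧ IsExternal fst snd M f).card : ℝ) := by
  set K := univ.filter fun f : E =>
    col f = c ∧ fst f ∈ mVerts fst snd M ∧ snd f ∈ mVerts fst snd M
  have hK : K.card ≤ M.card := by
    have hKdisj : ∀ a ∈ K, ∀ b ∈ K, a ≠ b → endpts fst snd a ∩ endpts fst snd b = ∅ :=
      fun a ha b hb hab => not_nonempty_iff_eq_empty.1 fun h =>
        hproper a b hab h ((mem_filter.1 ha).2.1.trans (mem_filter.1 hb).2.1.symm)
    have hsub : mVerts fst snd K ⊆ mVerts fst snd M := fun v hv => by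
      obtain ⟨f, hf, hvf⟩ := mem_mVerts.1 hv
      rcases mem_endpts.1 hvf with rfl | rfl
      exacts [(mem_filter.1 hf).2.2.1, (mem_filter.1 hf).2.2.2]
    have := card_le_card hsub
    rw [card_mVerts_of_pairwise_disjoint hloop hKdisj,
      card_mVerts_of_pairwise_disjoint hloop hM.1] at this
    omega
  have hcover : univ.filter (fun f : E => col f = c) ⊆
      univ.filter (fun f : E => col f = c ∧ IsExternal fst snd M f) ∪ K := fun f hf => by
    have hfc := (mem_filter.1 hf).2
    obtain ⟨v, hv, hvM⟩ := exists_mem_mVerts_of_col_mem_C0 hM hMmax (hfc ▸ hc)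
    rw [mem_union, mem_filter, mem_filter]
    simp only [mem_univ, true_and, IsExternal]
    rcases mem_endpts.1 hv with rfl | rfl <;> by_cases h : fst f ∈ mVerts fst snd M <;>
      by_cases h' : snd f ∈ mVerts fst snd M <;> simp_all
  have := (card_le_card hcover).trans (card_union_le _ _)
  have : ((univ.filter fun f : E => col f = c).card : ℝ) ≤
      (univ.filter fun f : E => col f = c ∧ IsExternal fst snd M f).card + M.card := by
    exact_mod_cast this.trans (by omega)
  linarith

lemma card_external_C0_le_sum_extC0deg [Fintype E] :
    (univ.filter fun f : E => IsExternal fst snd M f ∧ col f ∈ C0 col M).card ≤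
      ∑ g ∈ M, ∑ v ∈ endpts fst snd g, extC0deg fst snd col M v := by
  have hsub : univ.filter (fun f : E => IsExternal fst snd M f ∧ col f ∈ C0 col M) ⊆
      M.biUnion fun g => (endpts fst snd g).biUnion fun v => univ.filter fun f : E =>
        IsExternal fst snd M f ∧ col f ∈ C0 col M ∧ v ∈ endpts fst snd f := fun f hf => by
    obtain ⟨hext, hcol⟩ := (mem_filter.1 hf).2
    obtain ⟨v, hv, hvM⟩ : ∃ v ∈ endpts fst snd f, v ∈ mVerts fst snd M := by
      rcases hext with ⟨h, -⟩ | ⟨-, h⟩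
      exacts [⟨_, fst_mem_endpts f, h⟩, ⟨_, snd_mem_endpts f, h⟩]
    obtain ⟨g, hg, hvg⟩ := mem_mVerts.1 hvM
    simp only [mem_biUnion, mem_filter, mem_univ, true_and]
    exact ⟨g, hg, v, hvg, hext, hcol, hv⟩
  exact (card_le_card hsub).trans <| card_biUnion_le.trans <|
    sum_le_sum fun g _ => card_biUnion_le

lemma mul_card_C0_le_card_external [Fintype E] [DecidableEq E] {ε : ℝ} {n : ℕ}
    (hloop : ∀ e : E, fst e ≠ snd e) (hproper : IsProperColouring fst snd col)
    (habund : ∀ c : C, (1 + ε) * n ≤ ((univ.filter fun e : E => col e = c).card : ℝ))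
    (hM : IsRainbowMatching fst snd col M)
    (hMmax : ∀ S : Finset E, IsRainbowMatching fst snd col S → S.card ≤ M.card)
    (hMn : (M.card : ℝ) ≤ n) :
    ε * n * (C0 col M).card ≤
      ((univ.filter fun f : E => IsExternal fst snd M f ∧ col f ∈ C0 col M).card : ℝ) := by
  rw [card_eq_sum_card_fiberwise (f := col) (t := C0 col M) fun f hf => (mem_filter.1 hf).2.2,
    Nat.cast_sum, mul_comm, ← nsmul_eq_mul]
  refine card_nsmul_le_sum _ _ _ fun c hc => ?_
  have hfib : ((univ.filter fun f : E => IsExternal fst snd M f ∧ col f ∈ C0 col M).filter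
      fun f => col f = c) = univ.filter fun f : E => col f = c ∧ IsExternal fst snd M f := by
    ext f
    simp only [mem_filter, mem_univ, true_and]
    constructor
    · rintro ⟨⟨h₁, -⟩, h₂⟩; exact ⟨h₂, h₁⟩
    · rintro ⟨rfl, h₁⟩; exact ⟨⟨h₁, hc⟩, rfl⟩
  rw [hfib]
  linarith [habund c, card_col_sub_card_le_card_external hloop hproper hM hMmax hc]

lemma card_external_le [Fintype E] [DecidableEq E] {α : ℝ} (hα : 0 ≤ α)
    (hproper : IsProperColouring fst snd col) :
    ((univ.filter fun f : E => IsExternal fst snd M f ∧ col f ∈ C0 col M).card : ℝ) ≤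
      (E0 fst snd col M α).card * (2 * (C0 col M).card) +
        M.card * (2 * (α * (C0 col M).card)) := by
  have hdeg (v : V) : (extC0deg fst snd col M v : ℝ) ≤ (C0 col M).card := by
    have := hproper.card_filter_col_mem_le (S := univ.filter fun f : E =>
      IsExternal fst snd M f ∧ col f ∈ C0 col M ∧ v ∈ endpts fst snd f)
      (fun f hf => (mem_filter.1 hf).2.2.2) (C0 col M)
    rw [filter_true_of_mem fun f hf => (mem_filter.1 hf).2.2.1] at this
    simp only [extC0deg]
    exact_mod_cast this
  have hsum (g : E) (b : ℝ) (hb : ∀ v ∈ endpts fst snd g, (extC0deg fst snd col M v : ℝ) ≤ b) :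
      ∑ v ∈ endpts fst snd g, (extC0deg fst snd col M v : ℝ) ≤ 2 * b := by
    have := sum_le_card_nsmul _ _ _ hb
    rw [nsmul_eq_mul] at this
    have h0 : 0 ≤ b := (Nat.cast_nonneg _).trans (hb _ (fst_mem_endpts g))
    have h2 : ((endpts fst snd g).card : ℝ) ≤ 2 := by exact_mod_cast card_endpts_le_two g
    nlinarith [mul_le_mul_of_nonneg_right h2 h0]
  have hE0 : E0 fst snd col M α ⊆ M := filter_subset _ _
  have hX : ((univ.filter fun f : E => IsExternal fst snd M f ∧ col f ∈ C0 col M).card : ℝ) ≤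
      ∑ g ∈ M \ E0 fst snd col M α, ∑ v ∈ endpts fst snd g, (extC0deg fst snd col M v : ℝ) +
        ∑ g ∈ E0 fst snd col M α, ∑ v ∈ endpts fst snd g, (extC0deg fst snd col M v : ℝ) := by
    rw [sum_sdiff hE0]
    exact_mod_cast card_external_C0_le_sum_extC0deg
  have h₁ := sum_le_card_nsmul (E0 fst snd col M α) _ _ fun g _ => hsum g _ fun v _ => hdeg v
  have h₂ := sum_le_card_nsmul (M \ E0 fst snd col M α) _ _ fun g hg => hsum g (α * (C0 col M).card)
    fun v hv => by
      by_contra! h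
      exact (mem_sdiff.1 hg).2 (mem_filter.2 ⟨(mem_sdiff.1 hg).1, v, hv, h.le⟩)
  have h₃ : ((M \ E0 fst snd col M α).card : ℝ) ≤ M.card := by
    exact_mod_cast card_le_card sdiff_subset
  rw [nsmul_eq_mul] at h₁ h₂
  nlinarith [mul_nonneg hα (Nat.cast_nonneg (α := ℝ) (C0 col M).card)]

/-- Double counting the external `C₀`-edges. -/
lemma card_E0_ge [Fintype E] [DecidableEq E] {ε k α : ℝ} {n : ℕ}
    (hloop : ∀ e : E, fst e ≠ snd e) (hproper : IsProperColouring fst snd col)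
    (hC : Fintype.card C = n)
    (habund : ∀ c : C, (1 + ε) * n ≤ ((univ.filter fun e : E => col e = c).card : ℝ))
    (hM : IsRainbowMatching fst snd col M)
    (hMmax : ∀ S : Finset E, IsRainbowMatching fst snd col S → S.card ≤ M.card)
    (hMlt : (M.card : ℝ) < n - k) (hε : ε = 12 * α) (hα : 0 < α) (hk : 0 ≤ k) :
    5 * α * n ≤ ((E0 fst snd col M α).card : ℝ) := by
  have hMn : (M.card : ℝ) ≤ n := by exact_mod_cast hC ▸ hM.card_le
  have hc₀ : (0 : ℝ) < (C0 col M).card := by rw [hM.card_C0, hC]; linarith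
  have h := (mul_card_C0_le_card_external hloop hproper habund hM hMmax hMn).trans
    (card_external_le hα.le hproper)
  have : ε * n ≤ 2 * (E0 fst snd col M α).card + 2 * α * M.card := by
    by_contra! h'
    nlinarith [mul_lt_mul_of_pos_right h' hc₀]
  nlinarith

end FlexibleColours

/-- A switching of the rainbow matching `M`: the edges `P ⊆ M` are replaced by the rainbow
matching `Q`, so that `(M \ P) ∪ Q` is again a rainbow matching of size `|M|`.  The edges of `T`
are removed, and the new edges avoid their heads and colours; new edges leaving `V(M)` avoid the
vertex set `W`, and colours in `D` are neither removed nor used by new edges. -/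
structure IsSwitching {V E C : Type*} [DecidableEq V] [Fintype C] [DecidableEq C]
    (fst snd : E → V) (col : E → C) (M : Finset E) (tl : E → V) (W : Finset V) (D : Finset C)
    (T P Q : Finset E) : Prop where
  subset : P ⊆ M
  targets_subset : T ⊆ P
  col_removed : ∀ p ∈ P, col p ∉ D
  card_eq : Q.card = P.card
  rainbow : IsRainbowMatching fst snd col Q
  endpts_added : ∀ q ∈ Q, ∀ v ∈ endpts fst snd q,
    (v ∈ mVerts fst snd P ∧ ∀ g ∈ T, v ≠ hdOf fst snd tl g) ∨ (v ∉ mVerts fst snd M ∧ v ∉ W)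
  col_added : ∀ q ∈ Q,
    (col q ∈ P.image col ∧ ∀ g ∈ T, col q ≠ col g) ∨ (col q ∈ C0 col M ∧ col q ∉ D)

/-- An endpoint for an entering edge: a fresh vertex, reserved in `W'` so that later switchings
avoid it, or the head of a removed target. -/
def IsFreedVertex {V E : Type*} [DecidableEq V] (fst snd : E → V) (M : Finset E) (tl : E → V)
    (W W' : Finset V) (T : Finset E) (u : V) : Prop :=
  (u ∉ mVerts fst snd M ∧ u ∉ W ∧ u ∈ W') ∨ ∃ h ∈ T, u = hdOf fst snd tl h

namespace IsSwitching

variable {V E C : Type*} [DecidableEq V] [Fintype C] [DecidableEq C] {fst snd : E → V}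
  {col : E → C} {M : Finset E} {tl : E → V} {W : Finset V} {D : Finset C} {T P Q : Finset E}

lemma col_added_notMem (h : IsSwitching fst snd col M tl W D T P Q) {q : E} (hq : q ∈ Q) :
    col q ∉ D := by
  rcases h.col_added q hq with ⟨hc, -⟩ | ⟨-, hc⟩
  · obtain ⟨p, hp, hpq⟩ := mem_image.1 hc
    exact hpq ▸ h.col_removed p hp
  · exact hc

lemma col_added_ne (h : IsSwitching fst snd col M tl W D T P Q) {q g : E} (hq : q ∈ Q)
    (hg : g ∈ T) : col q ≠ col g := by
  rcases h.col_added q hq with ⟨-, hc⟩ | ⟨hc, -⟩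
  · exact hc g hg
  · exact fun hqg => col_notMem_C0 (h.subset (h.targets_subset hg)) (hqg ▸ hc)

lemma empty : IsSwitching fst snd col M tl W D ∅ ∅ ∅ :=
  ⟨empty_subset _, subset_rfl, by simp, rfl, ⟨by simp, by simp⟩, by simp, by simp⟩

section Union

variable {W₂ : Finset V} {D₁ D₂ : Finset C} {T₁ T₂ P₁ P₂ Q₁ Q₂ : Finset E}

lemma notMem_mVerts_of_col_removed (hM : IsRainbowMatching fst snd col M)
    (h₁ : IsSwitching fst snd col M tl W D₁ T₁ P₁ Q₁)
    (h₂ : IsSwitching fst snd col M tl W₂ D₂ T₂ P₂ Q₂) (hD₂ : P₁.image col ⊆ D₂) {v : V}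
    (hv : v ∈ mVerts fst snd P₂) : v ∉ mVerts fst snd P₁ := by
  obtain ⟨p, hp, hvp⟩ := mem_mVerts.1 hv
  exact hM.notMem_mVerts h₁.subset (h₂.subset hp)
    (fun hp₁ => h₂.col_removed p hp (hD₂ (mem_image_of_mem col hp₁))) hvp

lemma endpts_added_union [DecidableEq E] (hM : IsRainbowMatching fst snd col M)
    (h₁ : IsSwitching fst snd col M tl W D₁ T₁ P₁ Q₁)
    (h₂ : IsSwitching fst snd col M tl W₂ D₂ T₂ P₂ Q₂) (hW : W ⊆ W₂)
    (hD₂ : P₁.image col ⊆ D₂) {q : E} (hq : q ∈ Q₁ ∪ Q₂) {v : V}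
    (hv : v ∈ endpts fst snd q) :
    (v ∈ mVerts fst snd (P₁ ∪ P₂) ∧ ∀ g ∈ T₁ ∪ T₂, v ≠ hdOf fst snd tl g) ∨
      (v ∉ mVerts fst snd M ∧ v ∉ W) := by
  have hhead {P T : Finset E} (hTP : T ⊆ P) {g : E} (hg : g ∈ T) :
      hdOf fst snd tl g ∈ mVerts fst snd P := endpts_subset_mVerts (hTP hg) (hdOf_mem_endpts tl g)
  rcases mem_union.1 hq with hq | hq
  · rcases h₁.endpts_added q hq v hv with ⟨hP, hT⟩ | hout
    · refine Or.inl ⟨mVerts_mono subset_union_left hP, fun g hg hvg => ?_⟩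
      rcases mem_union.1 hg with hg | hg
      · exact hT g hg hvg
      · exact notMem_mVerts_of_col_removed hM h₁ h₂ hD₂ (hvg ▸ hhead h₂.targets_subset hg) hP
    · exact Or.inr hout
  · rcases h₂.endpts_added q hq v hv with ⟨hP, hT⟩ | ⟨hout, hW₂⟩
    · refine Or.inl ⟨mVerts_mono subset_union_right hP, fun g hg hvg => ?_⟩
      rcases mem_union.1 hg with hg | hg
      · exact notMem_mVerts_of_col_removed hM h₁ h₂ hD₂ hP (hvg ▸ hhead h₁.targets_subset hg)
      · exact hT g hg hvg
    · exact Or.inr ⟨hout, fun h => hW₂ (hW h)⟩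

lemma col_added_union [DecidableEq E] (h₁ : IsSwitching fst snd col M tl W D₁ T₁ P₁ Q₁)
    (h₂ : IsSwitching fst snd col M tl W₂ D₂ T₂ P₂ Q₂) (hD₁ : D ∪ T₂.image col ⊆ D₁)
    (hD₂ : D ∪ P₁.image col ⊆ D₂) {q : E} (hq : q ∈ Q₁ ∪ Q₂) :
    (col q ∈ (P₁ ∪ P₂).image col ∧ ∀ g ∈ T₁ ∪ T₂, col q ≠ col g) ∨
      (col q ∈ C0 col M ∧ col q ∉ D) := by
  rw [image_union]
  rcases mem_union.1 hq with hq | hq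
  · rcases h₁.col_added q hq with ⟨hc, hT⟩ | ⟨hc, hD⟩
    · refine Or.inl ⟨mem_union_left _ hc, fun g hg hqg => ?_⟩
      rcases mem_union.1 hg with hg | hg
      · exact hT g hg hqg
      · obtain ⟨p, hp, hpq⟩ := mem_image.1 hc
        exact h₁.col_removed p hp (hD₁ (mem_union_right _ (hpq ▸ hqg ▸ mem_image_of_mem col hg)))
    · exact Or.inr ⟨hc, fun h => hD (hD₁ (mem_union_left _ h))⟩
  · rcases h₂.col_added q hq with ⟨hc, hT⟩ | ⟨hc, hD⟩
    · refine Or.inl ⟨mem_union_right _ hc, fun g hg hqg => ?_⟩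
      rcases mem_union.1 hg with hg | hg
      · exact h₂.col_added_notMem hq
          (hD₂ (mem_union_right _ (hqg ▸ mem_image_of_mem col (h₁.targets_subset hg))))
      · exact hT g hg hqg
    · exact Or.inr ⟨hc, fun h => hD (hD₂ (mem_union_left _ h))⟩

/-- Switchings for `T₁` and then for `T₂` combine, provided the second one avoids everything the
first one touched. -/
lemma union [DecidableEq E] (hM : IsRainbowMatching fst snd col M)
    (h₁ : IsSwitching fst snd col M tl W (D ∪ T₂.image col) T₁ P₁ Q₁)
    (h₂ : IsSwitching fst snd col M tl (W ∪ (mVerts fst snd Q₁ \ mVerts fst snd M))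
      (D ∪ P₁.image col ∪ Q₁.image col) T₂ P₂ Q₂) :
    IsSwitching fst snd col M tl W D (T₁ ∪ T₂) (P₁ ∪ P₂) (Q₁ ∪ Q₂) := by
  have hD₂ : D ∪ P₁.image col ⊆ D ∪ P₁.image col ∪ Q₁.image col := subset_union_left
  have hQ₂ {q : E} (hq : q ∈ Q₂) : col q ∉ Q₁.image col := fun hc =>
    h₂.col_added_notMem hq (mem_union_right _ hc)
  refine ⟨union_subset h₁.subset h₂.subset, union_subset_union h₁.targets_subset
      h₂.targets_subset, fun p hp hpD => ?_, ?_, ?_, fun q hq v hv => endpts_added_union hM h₁ h₂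
      subset_union_left (union_subset_right hD₂) hq hv, fun q hq => col_added_union h₁ h₂
      subset_rfl hD₂ hq⟩
  · rcases mem_union.1 hp with hp | hp
    exacts [h₁.col_removed p hp (mem_union_left _ hpD),
      h₂.col_removed p hp (hD₂ (mem_union_left _ hpD))]
  · rw [card_union_of_disjoint, card_union_of_disjoint, h₁.card_eq, h₂.card_eq]
    · exact disjoint_right.2 fun p hp hp₁ => h₂.col_removed p hp
        (hD₂ (mem_union_right _ (mem_image_of_mem col hp₁)))
    · exact disjoint_right.2 fun q hq hq₁ => hQ₂ hq (mem_image_of_mem col hq₁)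
  · refine h₁.rainbow.union h₂.rainbow (fun q₁ hq₁ q₂ hq₂ => ?_)
      fun q₁ hq₁ q₂ hq₂ hc => hQ₂ hq₂ (hc ▸ mem_image_of_mem col hq₁)
    refine eq_empty_of_forall_notMem fun v hv => ?_
    obtain ⟨hv₁, hv₂⟩ := mem_inter.1 hv
    rcases h₁.endpts_added q₁ hq₁ v hv₁ with ⟨hP₁, -⟩ | ⟨hM₁, -⟩ <;>
      rcases h₂.endpts_added q₂ hq₂ v hv₂ with ⟨hP₂, -⟩ | ⟨hM₂, hW₂⟩
    · exact notMem_mVerts_of_col_removed hM h₁ h₂ (union_subset_right hD₂) hP₂ hP₁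
    · exact hM₂ (mVerts_mono h₁.subset hP₁)
    · exact hM₁ (mVerts_mono h₂.subset hP₂)
    · exact hW₂ (mem_union_right _ (mem_sdiff.2 ⟨mem_mVerts.2 ⟨q₁, hq₁, hv₁⟩, hM₁⟩))

end Union

section Extend

variable {W' : Finset V} {D' : Finset C} {g g' f : E}

lemma endpts_inter_eq_empty_of_isFreedVertex (htl : ∀ e : E, tl e = fst e ∨ tl e = snd e)
    (hM : IsRainbowMatching fst snd col M) (h : IsSwitching fst snd col M tl W' D' T P Q)
    (hgM : g ∈ M) (hgP : g ∉ P) (hf : tl g ∈ endpts fst snd f)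
    (hu : IsFreedVertex fst snd M tl W W' T (other fst snd (tl g) f)) {q : E} (hq : q ∈ Q) :
    endpts fst snd f ∩ endpts fst snd q = ∅ :=
  eq_empty_of_forall_notMem fun v hv => by
    obtain ⟨hvf, hvq⟩ := mem_inter.1 hv
    rcases eq_or_eq_other_of_mem_endpts hf hvf with rfl | rfl <;>
      rcases h.endpts_added q hq _ hvq with ⟨hP, hT⟩ | ⟨hout, hW'⟩
    · exact hM.notMem_mVerts h.subset hgM hgP (tl_mem_endpts htl g) hP
    · exact hout (endpts_subset_mVerts hgM (tl_mem_endpts htl g))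
    · rcases hu with ⟨hout, -, -⟩ | ⟨t, ht, hut⟩
      · exact hout (mVerts_mono h.subset hP)
      · exact hT t ht hut
    · rcases hu with ⟨-, -, hu⟩ | ⟨t, ht, hut⟩
      · exact hW' hu
      · exact hout (hut ▸ endpts_subset_mVerts (h.subset (h.targets_subset ht))
          (hdOf_mem_endpts tl t))

lemma endpts_added_insert [DecidableEq E] (hloop : ∀ e : E, fst e ≠ snd e)
    (htl : ∀ e : E, tl e = fst e ∨ tl e = snd e) (hM : IsRainbowMatching fst snd col M)
    (h : IsSwitching fst snd col M tl W' D' T P Q) (hW : W ⊆ W') (hgM : g ∈ M) (hgP : g ∉ P)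
    (hf : tl g ∈ endpts fst snd f) (hu : IsFreedVertex fst snd M tl W W' T (other fst snd (tl g) f))
    {q : E} (hq : q ∈ insert f Q) {v : V} (hv : v ∈ endpts fst snd q) :
    (v ∈ mVerts fst snd (insert g P) ∧ ∀ x ∈ ({g} : Finset E), v ≠ hdOf fst snd tl x) ∨
      (v ∉ mVerts fst snd M ∧ v ∉ W) := by
  simp only [mem_singleton, forall_eq]
  rcases mem_insert.1 hq with rfl | hq
  · rcases eq_or_eq_other_of_mem_endpts hf hv with rfl | rfl
    · exact Or.inl ⟨mem_mVerts.2 ⟨g, mem_insert_self _ _, tl_mem_endpts htl g⟩,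
        (hdOf_ne_tl hloop htl g).symm⟩
    · rcases hu with ⟨hout, hW, -⟩ | ⟨t, ht, hut⟩
      · exact Or.inr ⟨hout, hW⟩
      · have htM := h.subset (h.targets_subset ht)
        refine Or.inl ⟨hut ▸ mVerts_mono (subset_insert g P)
          (endpts_subset_mVerts (h.targets_subset ht) (hdOf_mem_endpts tl t)), fun hd => ?_⟩
        rw [hut] at hd
        exact hgP (hM.eq_of_mem_endpts htM hgM (hdOf_mem_endpts tl t)
          (hd ▸ hdOf_mem_endpts tl g) ▸ h.targets_subset ht)
  · rcases h.endpts_added q hq v hv with ⟨hP, -⟩ | ⟨hout, hW'⟩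
    · exact Or.inl ⟨mVerts_mono (subset_insert g P) hP,
        fun hvg => hM.notMem_mVerts h.subset hgM hgP (hvg ▸ hdOf_mem_endpts tl g) hP⟩
    · exact Or.inr ⟨hout, fun hv => hW' (hW hv)⟩

/-- One switching step: `g` is removed and `f` enters at the tail of `g`, taking over the colour
of `g'`, which the switching for `P` has released. -/
lemma extend [DecidableEq E] (hloop : ∀ e : E, fst e ≠ snd e)
    (htl : ∀ e : E, tl e = fst e ∨ tl e = snd e)
    (hM : IsRainbowMatching fst snd col M) (h : IsSwitching fst snd col M tl W' D' T P Q)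
    (hW : W ⊆ W') (hD : insert (col g) D ⊆ D') (hgM : g ∈ M) (hgD : col g ∉ D)
    (hf : tl g ∈ endpts fst snd f) (hg' : g' ∈ P) (hfg' : col f = col g')
    (hQg' : ∀ q ∈ Q, col q ≠ col g')
    (hu : IsFreedVertex fst snd M tl W W' T (other fst snd (tl g) f)) :
    IsSwitching fst snd col M tl W D {g} (insert g P) (insert f Q) := by
  have hgD' : col g ∈ D' := hD (mem_insert_self _ _)
  have hgP : g ∉ P := fun hg => h.col_removed g hg hgD'
  refine ⟨insert_subset hgM h.subset, by simp, fun p hp => ?_, ?_, ?_,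
    fun q hq v hv => endpts_added_insert hloop htl hM h hW hgM hgP hf hu hq hv, fun q hq => ?_⟩
  · rcases mem_insert.1 hp with rfl | hp
    exacts [hgD, fun hpD => h.col_removed p hp (hD (mem_insert_of_mem hpD))]
  · rw [card_insert_of_notMem fun hfQ => hQg' f hfQ hfg', card_insert_of_notMem hgP, h.card_eq]
  · exact h.rainbow.insert
      (fun q hq => endpts_inter_eq_empty_of_isFreedVertex htl hM h hgM hgP hf hu hq)
      fun q hq hfq => hQg' q hq (hfq ▸ hfg')
  · rcases mem_insert.1 hq with rfl | hq
    · refine Or.inl ⟨mem_image.2 ⟨g', mem_insert_of_mem hg', hfg'.symm⟩, ?_⟩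
      simp only [mem_singleton, forall_eq]
      exact fun hfg => h.col_removed g' hg' (hfg' ▸ hfg ▸ hgD')
    · rcases h.col_added q hq with ⟨hc, -⟩ | ⟨hc, hD'⟩
      · obtain ⟨p, hp, hpq⟩ := mem_image.1 hc
        refine Or.inl ⟨mem_image.2 ⟨p, mem_insert_of_mem hp, hpq⟩, ?_⟩
        simp only [mem_singleton, forall_eq]
        exact fun hqg => h.col_removed p hp (hpq ▸ hqg ▸ hgD')
      · exact Or.inr ⟨hc, fun hqD => hD' (hD (mem_insert_of_mem hqD))⟩

end Extend

lemma endpts_inter_eq_empty (hM : IsRainbowMatching fst snd col M)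
    (h : IsSwitching fst snd col M tl W D T P Q) {a q : E} (ha : a ∈ M) (haP : a ∉ P)
    (hq : q ∈ Q) : endpts fst snd a ∩ endpts fst snd q = ∅ :=
  eq_empty_of_forall_notMem fun v hv => by
    obtain ⟨hva, hvq⟩ := mem_inter.1 hv
    rcases h.endpts_added q hq v hvq with ⟨hP, -⟩ | ⟨hout, -⟩
    · exact hM.notMem_mVerts h.subset ha haP hva hP
    · exact hout (endpts_subset_mVerts ha hva)

lemma col_ne (hM : IsRainbowMatching fst snd col M) (h : IsSwitching fst snd col M tl W D T P Q)
    {a q : E} (ha : a ∈ M) (haP : a ∉ P) (hq : q ∈ Q) : col a ≠ col q := fun haq => by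
  rcases h.col_added q hq with ⟨hc, -⟩ | ⟨hc, -⟩
  · obtain ⟨p, hp, hpq⟩ := mem_image.1 hc
    exact haP (hM.eq_of_col_eq (h.subset hp) ha (hpq.trans haq.symm) ▸ hp)
  · exact col_notMem_C0 ha (haq ▸ hc)

lemma isRainbowMatching_sdiff_union [DecidableEq E] (hM : IsRainbowMatching fst snd col M)
    (h : IsSwitching fst snd col M tl W D T P Q) :
    IsRainbowMatching fst snd col (M \ P ∪ Q) :=
  (hM.mono sdiff_subset).union h.rainbow
    (fun _ ha _ hq => h.endpts_inter_eq_empty hM (mem_sdiff.1 ha).1 (mem_sdiff.1 ha).2 hq)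
    fun _ ha _ hq => h.col_ne hM (mem_sdiff.1 ha).1 (mem_sdiff.1 ha).2 hq

lemma card_sdiff_union [DecidableEq E] (hM : IsRainbowMatching fst snd col M)
    (h : IsSwitching fst snd col M tl W D T P Q) : (M \ P ∪ Q).card = M.card := by
  have hdisj : Disjoint (M \ P) Q := disjoint_left.2 fun a ha haQ =>
    notMem_of_forall_endpts_inter_eq_empty
      (fun q hq => h.endpts_inter_eq_empty hM (mem_sdiff.1 ha).1 (mem_sdiff.1 ha).2 hq) haQ
  rw [card_union_of_disjoint hdisj, card_sdiff_of_subset h.subset, h.card_eq,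
    Nat.sub_add_cancel (card_le_card h.subset)]

/-- A switching that frees both endpoints of `e` (they lie outside `V(M)` or are heads of
targets) and the colour of `e` (it is the colour of a target) yields a larger rainbow matching
`(M \ P) ∪ Q ∪ {e}`. -/
lemma exists_card_lt [DecidableEq E] (hM : IsRainbowMatching fst snd col M) {e gc : E}
    (h : IsSwitching fst snd col M tl (endpts fst snd e) D T P Q) (hgc : gc ∈ T)
    (hcol : col e = col gc)
    (hend : ∀ v ∈ endpts fst snd e, v ∉ mVerts fst snd M ∨ ∃ t ∈ T, v = hdOf fst snd tl t) :
    ∃ S, IsRainbowMatching fst snd col S ∧ M.card < S.card := by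
  have hvert : ∀ b ∈ M \ P ∪ Q, endpts fst snd e ∩ endpts fst snd b = ∅ := fun b hb =>
    eq_empty_of_forall_notMem fun v hv => by
      obtain ⟨hve, hvb⟩ := mem_inter.1 hv
      rcases mem_union.1 hb with hb | hb
      · rcases hend v hve with hout | ⟨t, ht, rfl⟩
        · exact hout (endpts_subset_mVerts (mem_sdiff.1 hb).1 hvb)
        · exact (mem_sdiff.1 hb).2 (hM.eq_of_mem_endpts (h.subset (h.targets_subset ht))
            (mem_sdiff.1 hb).1 (hdOf_mem_endpts tl t) hvb ▸ h.targets_subset ht)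
      · rcases h.endpts_added b hb v hvb with ⟨hP, hT⟩ | ⟨-, hW⟩
        · rcases hend v hve with hout | ⟨t, ht, rfl⟩
          · exact hout (mVerts_mono h.subset hP)
          · exact hT t ht rfl
        · exact hW hve
  have hcols : ∀ b ∈ M \ P ∪ Q, col e ≠ col b := fun b hb => by
    rcases mem_union.1 hb with hb | hb
    · exact fun heb => (mem_sdiff.1 hb).2 (hM.eq_of_col_eq (h.subset (h.targets_subset hgc))
        (mem_sdiff.1 hb).1 (hcol.symm.trans heb) ▸ h.targets_subset hgc)
    · exact hcol ▸ (h.col_added_ne hb hgc).symm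
  refine ⟨_, (h.isRainbowMatching_sdiff_union hM).insert hvert hcols, ?_⟩
  rw [card_insert_of_notMem (notMem_of_forall_endpts_inter_eq_empty hvert),
    h.card_sdiff_union hM]
  omega

end IsSwitching

/-- `T` can be freed by switching at most `s` edges, whenever the forbidden vertices `W` and
colours `D` leave room `3s` in the budget `Θ`. -/
def Freeable {V E C : Type*} [DecidableEq V] [Fintype C] [DecidableEq C] (fst snd : E → V)
    (col : E → C) (M : Finset E) (tl : E → V) (Θ s : ℝ) (T : Finset E) : Prop :=
  ∀ (W : Finset V) (D : Finset C), (W.card : ℝ) + 3 * s ≤ Θ → (D.card : ℝ) + 3 * s ≤ Θ →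
    (∀ g ∈ T, col g ∉ D) → ∃ P Q, IsSwitching fst snd col M tl W D T P Q ∧ (P.card : ℝ) ≤ s

namespace Freeable

variable {V E C : Type*} [DecidableEq V] [Fintype C] [DecidableEq C] {fst snd : E → V}
  {col : E → C} {M : Finset E} {tl : E → V} {Θ s : ℝ} {T : Finset E}

lemma mono (h : Freeable fst snd col M tl Θ s T) {s' : ℝ} (hs : s ≤ s') :
    Freeable fst snd col M tl Θ s' T := fun W D hW hD hT => by
  obtain ⟨P, Q, hPQ, hP⟩ := h W D (by linarith) (by linarith) hT
  exact ⟨P, Q, hPQ, hP.trans hs⟩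

/-- Targets are freed one at a time, each later switching avoiding the vertices and colours
touched by the earlier ones. -/
lemma of_forall_singleton [DecidableEq E] (hM : IsRainbowMatching fst snd col M) {B : ℝ}
    (hB : 1 ≤ B) (T : Finset E) (hTM : T ⊆ M) (hT : ∀ g ∈ T, Freeable fst snd col M tl Θ B {g}) :
    Freeable fst snd col M tl Θ (T.card * B) T := by
  induction T using Finset.induction_on with
  | empty => exact fun W D _ _ _ => ⟨∅, ∅, IsSwitching.empty, by simp⟩
  | @insert g T hgT ih =>
    intro W D hW hD hTD
    rw [card_insert_of_notMem hgT, Nat.cast_succ] at hW hD ⊢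
    obtain ⟨hgM, hTM⟩ := insert_subset_iff.1 hTM
    have hBT : (0 : ℝ) ≤ T.card * B := by positivity
    have hcolT : ((D ∪ T.image col).card : ℝ) ≤ D.card + T.card * B := by
      have : (D ∪ T.image col).card ≤ D.card + T.card :=
        (card_union_le _ _).trans (Nat.add_le_add_left card_image_le _)
      have hT' : (T.card : ℝ) ≤ T.card * B := le_mul_of_one_le_right (Nat.cast_nonneg _) hB
      push_cast [← Nat.cast_le (α := ℝ)] at this
      linarith
    have hgD : ∀ g' ∈ ({g} : Finset E), col g' ∉ D ∪ T.image col := by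
      simp only [mem_singleton, forall_eq, mem_union, mem_image, not_or, not_exists, not_and]
      exact ⟨hTD g (mem_insert_self g T),
        fun g' hg' hc => hgT (hM.eq_of_col_eq (hTM hg') hgM hc ▸ hg')⟩
    obtain ⟨P₁, Q₁, h₁, hP₁⟩ :=
      hT g (mem_insert_self g T) W (D ∪ T.image col) (by linarith) (by linarith) hgD
    have hW₂ : ((W ∪ (mVerts fst snd Q₁ \ mVerts fst snd M)).card : ℝ) ≤ W.card + 2 * B := by
      have : (W ∪ (mVerts fst snd Q₁ \ mVerts fst snd M)).card ≤ W.card + 2 * Q₁.card :=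
        (card_union_le _ _).trans (Nat.add_le_add_left
          ((card_le_card sdiff_subset).trans (card_mVerts_le Q₁)) _)
      rw [h₁.card_eq] at this
      push_cast [← Nat.cast_le (α := ℝ)] at this
      linarith
    have hD₂ : ((D ∪ P₁.image col ∪ Q₁.image col).card : ℝ) ≤ D.card + 2 * B := by
      have : (D ∪ P₁.image col ∪ Q₁.image col).card ≤ D.card + P₁.card + Q₁.card :=
        (card_union_le _ _).trans (Nat.add_le_add ((card_union_le _ _).trans
          (Nat.add_le_add_left card_image_le _)) card_image_le)
      rw [h₁.card_eq] at this
      push_cast [← Nat.cast_le (α := ℝ)] at this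
      linarith
    have hTD₂ : ∀ g' ∈ T, col g' ∉ D ∪ P₁.image col ∪ Q₁.image col := fun g' hg' => by
      have hg'D₁ : col g' ∈ D ∪ T.image col := mem_union_right _ (mem_image_of_mem col hg')
      simp only [mem_union, mem_image, not_or, not_exists, not_and]
      refine ⟨⟨hTD g' (mem_insert_of_mem hg'), fun p hp hpg => ?_⟩, fun q hq hqg => ?_⟩
      · exact h₁.col_removed p hp (hpg ▸ hg'D₁)
      · exact h₁.col_added_notMem hq (hqg ▸ hg'D₁)
    obtain ⟨P₂, Q₂, h₂, hP₂⟩ := ih hTM (fun g' hg' => hT g' (mem_insert_of_mem hg')) _ _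
      (by linarith) (by linarith) hTD₂
    refine ⟨P₁ ∪ P₂, Q₁ ∪ Q₂, ?_, ?_⟩
    · simpa only [insert_eq] using h₁.union hM h₂
    · have := card_union_le P₁ P₂
      push_cast [← Nat.cast_le (α := ℝ)] at this
      linarith

end Freeable

section FirstLayer

variable {V E C : Type*} [DecidableEq V] [Fintype C] [DecidableEq C] {fst snd : E → V}
  {col : E → C} {M : Finset E} {tl : E → V}

lemma IsSwitching.single {W : Finset V} {D : Finset C} {g f : E} {x : V} (hg : g ∈ M)
    (hxf : x ∈ endpts fst snd f) (hxg : x ∈ endpts fst snd g) (hfC0 : col f ∈ C0 col M)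
    (hfD : col f ∉ D) (hgD : col g ∉ D) (hout : other fst snd x f ∉ mVerts fst snd M)
    (hW : other fst snd x f ∉ W) : IsSwitching fst snd col M tl W D ∅ {g} {f} := by
  refine ⟨by simpa using hg, empty_subset _, by simpa using hgD, rfl, .singleton f, ?_, by simp [*]⟩
  simp only [mem_singleton, forall_eq]
  intro v hv
  rcases eq_or_eq_other_of_mem_endpts hxf hv with rfl | rfl
  · exact Or.inl ⟨endpts_subset_mVerts (mem_singleton_self g) hxg, by simp⟩
  · exact Or.inr ⟨hout, hW⟩

/-- The edges through `W` meeting the matching edge `m_{col f}`: these are the external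
`C₀`-edges at `m_{col f}` that become unusable once `W` is forbidden. -/
noncomputable def spoilingEdges {V E C : Type*} [DecidableEq V] [DecidableEq C] [Fintype E]
    (fst snd : E → V) (col : E → C)
    (M : Finset E) (W : Finset V) (f : E) : Finset E :=
  (univ.filter fun f' : E => ∃ w ∈ W, w ∈ endpts fst snd f').filter fun f' =>
    ∃ h ∈ M, col h = col f ∧ (endpts fst snd f' ∩ endpts fst snd h).Nonempty

lemma card_filter_spoilingEdges_le [Fintype E] {n : ℕ}
    (hproper : IsProperColouring fst snd col) (hC : Fintype.card C = n)
    (hM : IsRainbowMatching fst snd col M) {t : V} {S : Finset E}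
    (hS : ∀ f ∈ S, t ∈ endpts fst snd f) (W : Finset V) (τ : ℝ) :
    ((S.filter fun f => τ ≤ (spoilingEdges fst snd col M W f).card).card : ℝ) * τ ≤
      2 * (W.card * n) := by
  have hA : ((univ.filter fun f' : E => ∃ w ∈ W, w ∈ endpts fst snd f').card : ℝ) ≤ W.card * n := by
    exact_mod_cast hC ▸ hproper.card_filter_exists_mem_endpts_le W
  have hsum : ∑ f ∈ S, ((spoilingEdges fst snd col M W f).card : ℝ) ≤
      2 * (univ.filter fun f' : E => ∃ w ∈ W, w ∈ endpts fst snd f').card := by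
    have : ∑ f ∈ S, (spoilingEdges fst snd col M W f).card ≤
        2 * (univ.filter fun f' : E => ∃ w ∈ W, w ∈ endpts fst snd f').card :=
      sum_card_filter_meets_le hproper hM hS _
    exact_mod_cast this
  have := S.card_filter_le_mul_le_sum (fun f => (spoilingEdges fst snd col M W f).card) τ
  linarith

/-- The third condition on `f` keeps enough external `C₀`-edges at `m_{col f}` available. -/
lemma exists_good_edge [Fintype E] {k α Θ : ℝ} {n : ℕ} (hproper : IsProperColouring fst snd col)
    (hC : Fintype.card C = n)
    (hmult : ∀ u v : V, ((univ.filter fun e : E => endpts fst snd e = {u, v}).card : ℝ) ≤ n / k)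
    (hM : IsRainbowMatching fst snd col M) (hα : 0 < α) (hk : 0 < k)
    (hC0 : k ≤ ((C0 col M).card : ℝ)) {t : V} {c : C} {W : Finset V} {D : Finset C}
    (hW : (W.card : ℝ) ≤ Θ) (hD : (D.card : ℝ) ≤ Θ)
    (hΘ : Θ + 1 + Θ * (n / k) + 8 * Θ * n / (α * k) < 5 * (α ^ 2 * n))
    (hgood : 5 * (α ^ 2 * n) ≤ (goodDeg fst snd col M α t : ℝ)) :
    ∃ f, IsGood fst snd col M α f ∧ t ∈ endpts fst snd f ∧ col f ∉ insert c D ∧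
      other fst snd t f ∉ W ∧
      ((spoilingEdges fst snd col M W f).card : ℝ) < α * (C0 col M).card / 4 := by
  set S := univ.filter fun f : E => IsGood fst snd col M α f ∧ t ∈ endpts fst snd f
  set τ := α * (C0 col M).card / 4
  have hS : ∀ f ∈ S, t ∈ endpts fst snd f := fun f hf => (mem_filter.1 hf).2.2
  have hB₁ : ((S.filter (col · ∈ insert c D)).card : ℝ) ≤ Θ + 1 := by
    have := (hproper.card_filter_col_mem_le hS (insert c D)).trans (card_insert_le c D)
    push_cast [← Nat.cast_le (α := ℝ)] at this
    linarith
  have hB₂ : ((S.filter (other fst snd t · ∈ W)).card : ℝ) ≤ Θ * (n / k) :=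
    (card_filter_other_mem_le hmult hS W).trans
      (mul_le_mul_of_nonneg_right hW (by positivity))
  have hB₃ : ((S.filter fun f => τ ≤ (spoilingEdges fst snd col M W f).card).card : ℝ) ≤
      8 * Θ * n / (α * k) := by
    have hτ : α * k / 4 ≤ τ := by simp only [τ]; nlinarith
    rw [le_div_iff₀ (by positivity)]
    nlinarith [card_filter_spoilingEdges_le hproper hC hM hS W τ,
      mul_le_mul_of_nonneg_left hτ (Nat.cast_nonneg (α := ℝ)
        (S.filter fun f => τ ≤ (spoilingEdges fst snd col M W f).card).card),
      mul_le_mul_of_nonneg_right hW (Nat.cast_nonneg (α := ℝ) n)]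
  have hbad : ((S.filter fun f => col f ∈ insert c D ∨ other fst snd t f ∈ W ∨
      τ ≤ (spoilingEdges fst snd col M W f).card).card : ℝ) < S.card := by
    have h₁ := S.card_filter_or_le (col · ∈ insert c D) fun f => other fst snd t f ∈ W ∨
      τ ≤ (spoilingEdges fst snd col M W f).card
    have h₂ := S.card_filter_or_le (other fst snd t · ∈ W) fun f =>
      τ ≤ (spoilingEdges fst snd col M W f).card
    have hgood' : (goodDeg fst snd col M α t : ℝ) = S.card := rfl
    push_cast [← Nat.cast_le (α := ℝ)] at h₁ h₂
    linarith
  obtain ⟨f, hf, hbadf⟩ := exists_mem_not_of_card_filter_lt (by exact_mod_cast hbad)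
  simp only [not_or, not_le] at hbadf
  exact ⟨f, (mem_filter.1 hf).2.1, hS f hf, hbadf.1, hbadf.2.1, hbadf.2.2⟩

lemma exists_external_C0_edge [Fintype E] {α : ℝ} (hproper : IsProperColouring fst snd col)
    {f g₁ : E} (hg₁ : g₁ ∈ M) (hg₁f : col g₁ = col f) {W : Finset V} {D : Finset C}
    (hD : 2 * (D.card : ℝ) ≤ α * (C0 col M).card / 4)
    (hspoil : ((spoilingEdges fst snd col M W f).card : ℝ) < α * (C0 col M).card / 4)
    (hWS : α * (C0 col M).card / 2 ≤ ((univ.filter fun f' : E =>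
        IsExternal fst snd M f' ∧ col f' ∈ C0 col M ∧
        (endpts fst snd f' ∩ endpts fst snd g₁).Nonempty ∧
        endpts fst snd f' ∩ endpts fst snd f = ∅).card : ℝ)) :
    ∃ f', IsExternal fst snd M f' ∧ col f' ∈ C0 col M ∧
      (endpts fst snd f' ∩ endpts fst snd g₁).Nonempty ∧
      endpts fst snd f' ∩ endpts fst snd f = ∅ ∧ col f' ∉ D ∧ ∀ w ∈ W, w ∉ endpts fst snd f' := by
  set S := univ.filter fun f' : E => IsExternal fst snd M f' ∧ col f' ∈ C0 col M ∧
    (endpts fst snd f' ∩ endpts fst snd g₁).Nonempty ∧ endpts fst snd f' ∩ endpts fst snd f = ∅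
  have hB₁ := hproper.card_filter_col_mem_le_two_mul (S := S)
    (fun f' hf' => (mem_filter.1 hf').2.2.2.1) D
  have hB₂ : (S.filter fun f' => ∃ w ∈ W, w ∈ endpts fst snd f') ⊆
      spoilingEdges fst snd col M W f := fun f' hf' => by
      simp only [S, spoilingEdges, mem_filter, mem_univ, true_and] at hf' ⊢
      exact ⟨hf'.2, g₁, hg₁, hg₁f, hf'.1.2.2.1⟩
  have hbad := S.card_filter_or_le (col · ∈ D) fun f' => ∃ w ∈ W, w ∈ endpts fst snd f'
  have hB₂' := card_le_card hB₂
  push_cast [← Nat.cast_le (α := ℝ)] at hB₁ hbad hB₂'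
  obtain ⟨f', hf', hgood⟩ := exists_mem_not_of_card_filter_lt (s := S)
    (p := fun f' => col f' ∈ D ∨ ∃ w ∈ W, w ∈ endpts fst snd f') (by exact_mod_cast (by linarith :
      ((S.filter fun f' => col f' ∈ D ∨ ∃ w ∈ W, w ∈ endpts fst snd f').card : ℝ) < S.card))
  simp only [not_or, not_exists, not_and] at hgood
  obtain ⟨-, hext, hC0, hmeet, hdisj⟩ := mem_filter.1 hf'
  exact ⟨f', hext, hC0, hmeet, hdisj, hgood.1, hgood.2⟩

lemma freeable_of_goodDeg [Fintype E] [DecidableEq E] {k α Θ : ℝ} {n : ℕ}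
    (hloop : ∀ e : E, fst e ≠ snd e) (htl : ∀ e : E, tl e = fst e ∨ tl e = snd e)
    (hproper : IsProperColouring fst snd col) (hC : Fintype.card C = n)
    (hmult : ∀ u v : V, ((univ.filter fun e : E => endpts fst snd e = {u, v}).card : ℝ) ≤ n / k)
    (hM : IsRainbowMatching fst snd col M) (hα : 0 < α) (hk : 0 < k)
    (hC0 : k ≤ ((C0 col M).card : ℝ)) (hΘk : 2 * Θ ≤ α * k / 4)
    (hΘ : Θ + 1 + Θ * (n / k) + 8 * Θ * n / (α * k) < 5 * (α ^ 2 * n)) {g : E} (hg : g ∈ M)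
    (hgood : 5 * (α ^ 2 * n) ≤ (goodDeg fst snd col M α (tl g) : ℝ)) :
    Freeable fst snd col M tl Θ 3 {g} := by
  intro W D hW hD hgD
  simp only [mem_singleton, forall_eq] at hgD
  obtain ⟨f, ⟨hext, -, g₁, hg₁, hg₁f, hWS⟩, htf, hfD, hfW, hspoil⟩ :=
    exists_good_edge hproper hC hmult hM hα hk hC0 (c := col g) (by linarith) (by linarith)
      hΘ hgood
  obtain ⟨f', hext', hf'C0, ⟨x, hx⟩, hff', hf'D, hf'W⟩ :=
    exists_external_C0_edge hproper hg₁ hg₁f (W := W) (D := D) (by nlinarith) hspoil hWS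
  obtain ⟨hxf', hxg₁⟩ := mem_inter.1 hx
  have htM : tl g ∈ mVerts fst snd M := endpts_subset_mVerts hg (tl_mem_endpts htl g)
  have hy := hext'.other_notMem_mVerts hloop hxf' (endpts_subset_mVerts hg₁ hxg₁)
  have hu := hext.other_notMem_mVerts hloop htf htM
  have hyu : other fst snd x f' ≠ other fst snd (tl g) f := fun hyu =>
    (eq_empty_iff_forall_notMem.1 hff') _
      (mem_inter.2 ⟨other_mem_endpts, by rw [hyu]; exact other_mem_endpts⟩)
  have hcol : col f' ∉ insert (col g) D := by
    rw [mem_insert, not_or]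
    exact ⟨fun h => col_notMem_C0 hg (h ▸ hf'C0), hf'D⟩
  have h₀ : IsSwitching fst snd col M tl (insert (other fst snd (tl g) f) W) (insert (col g) D)
      ∅ {g₁} {f'} :=
    .single hg₁ hxf' hxg₁ hf'C0 hcol (hg₁f ▸ hfD) hy
      (by simpa [hyu] using fun h => hf'W _ h other_mem_endpts)
  refine ⟨_, _, h₀.extend hloop htl hM (subset_insert _ _) subset_rfl hg hgD htf
    (mem_singleton_self g₁) hg₁f.symm (fun q hq => ?_) (Or.inl ⟨hu, hfW, mem_insert_self _ _⟩), ?_⟩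
  · rw [mem_singleton.1 hq]
    exact fun h => col_notMem_C0 hg₁ (h ▸ hf'C0)
  · have : (insert g ({g₁} : Finset E)).card ≤ 3 := (card_insert_le _ _).trans (by simp)
    exact_mod_cast this

end FirstLayer

section LaterLayers

variable {V E C : Type*} [DecidableEq V] [DecidableEq C] {fst snd : E → V}
  {col : E → C} {M : Finset E} {tl : E → V}

/-- Heads of matching edges with colours in `insert c D` are avoided so that, if the other
endpoint of `f` is the head of a matching edge `h`, that `h` may still be removed. -/
lemma exists_edge_avoiding [Fintype E] {k Θ : ℝ} {n : ℕ} (hproper : IsProperColouring fst snd col)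
    (hmult : ∀ u v : V, ((univ.filter fun e : E => endpts fst snd e = {u, v}).card : ℝ) ≤ n / k)
    (hM : IsRainbowMatching fst snd col M) (hnk : 0 ≤ (n : ℝ) / k) {t : V} {S : Finset E}
    (hS : ∀ f ∈ S, t ∈ endpts fst snd f) {c : C} {W : Finset V} {D : Finset C}
    (hW : (W.card : ℝ) ≤ Θ) (hD : (D.card : ℝ) ≤ Θ) (hΘ : Θ + 1 + (2 * Θ + 1) * (n / k) < S.card) :
    ∃ f ∈ S, col f ∉ insert c D ∧ other fst snd t f ∉ W ∧
      ∀ h ∈ M, col h ∈ insert c D → other fst snd t f ≠ hdOf fst snd tl h := by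
  set H := (M.filter (col · ∈ insert c D)).image (hdOf fst snd tl)
  have hH : H.card ≤ D.card + 1 := card_image_le.trans <|
    (card_le_card_of_injOn col (fun h hh => (mem_filter.1 hh).2) fun a ha b hb hab =>
      hM.eq_of_col_eq (mem_filter.1 ha).1 (mem_filter.1 hb).1 hab).trans (card_insert_le _ _)
  have hWH : ((W ∪ H).card : ℝ) ≤ 2 * Θ + 1 := by
    have := (card_union_le W H).trans (Nat.add_le_add_left hH _)
    push_cast [← Nat.cast_le (α := ℝ)] at this
    linarith
  have hB₁ : ((S.filter (col · ∈ insert c D)).card : ℝ) ≤ Θ + 1 := by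
    have := (hproper.card_filter_col_mem_le hS (insert c D)).trans (card_insert_le c D)
    push_cast [← Nat.cast_le (α := ℝ)] at this
    linarith
  have hB₂ := (card_filter_other_mem_le hmult hS (W ∪ H)).trans
    (mul_le_mul_of_nonneg_right hWH hnk)
  have hbad := S.card_filter_or_le (col · ∈ insert c D) (other fst snd t · ∈ W ∪ H)
  push_cast [← Nat.cast_le (α := ℝ)] at hbad
  obtain ⟨f, hf, hgood⟩ := exists_mem_not_of_card_filter_lt (s := S)
    (p := fun f => col f ∈ insert c D ∨ other fst snd t f ∈ W ∪ H)
    (by exact_mod_cast (by linarith : ((S.filter fun f => col f ∈ insert c D ∨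
      other fst snd t f ∈ W ∪ H).card : ℝ) < S.card))
  simp only [mem_union, not_or] at hgood
  refine ⟨f, hf, hgood.1, hgood.2.1, fun h hh hhc hfh => hgood.2.2 ?_⟩
  exact mem_image.2 ⟨h, mem_filter.2 ⟨hh, hhc⟩, hfh.symm⟩

lemma exists_freeable_targets [Fintype V] [Fintype C] [DecidableEq E] {Θ B : ℝ} {Es : ℕ → Finset E}
    {Vs : ℕ → Finset V} (hM : IsRainbowMatching fst snd col M)
    (hVs : ∀ i, Vs i = (Es i).image (hdOf fst snd tl)) {i : ℕ} (hEsM : ∀ j ∈ Ioo 0 i, Es j ⊆ M)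
    (hfree : ∀ j ∈ Ioo 0 i, ∀ g' ∈ Es j, Freeable fst snd col M tl Θ B {g'}) (hB : 1 ≤ B)
    {j : ℕ} (hj : j ∈ Ioo 0 i) {g' : E} (hg' : g' ∈ Es j) {D : Finset C} (hg'D : col g' ∉ D)
    {W : Finset V} {u : V} (hu : u ∈ (univ \ mVerts fst snd M) ∪ (Ioo 0 i).biUnion Vs)
    (huW : u ∉ W) (huD : ∀ h ∈ M, col h ∈ D → u ≠ hdOf fst snd tl h) :
    ∃ (W' : Finset V) (T : Finset E), W ⊆ W' ∧ (W'.card : ℝ) ≤ W.card + 1 ∧ g' ∈ T ∧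
      (∀ x ∈ T, col x ∉ D) ∧ Freeable fst snd col M tl Θ (2 * B) T ∧
      IsFreedVertex fst snd M tl W W' T u := by
  have hfreeT {T : Finset E} (hT : T.card ≤ 2) (hTM : T ⊆ M)
      (hTfree : ∀ x ∈ T, Freeable fst snd col M tl Θ B {x}) :
      Freeable fst snd col M tl Θ (2 * B) T :=
    (Freeable.of_forall_singleton hM hB T hTM hTfree).mono
      (mul_le_mul_of_nonneg_right (by exact_mod_cast hT) (by linarith))
  rcases mem_union.1 hu with hu | hu
  · refine ⟨insert u W, {g'}, subset_insert _ _, by exact_mod_cast card_insert_le _ _,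
      mem_singleton_self _, by simpa using hg'D, hfreeT (by simp) (by simpa using hEsM j hj hg')
      (by simpa using hfree j hj g' hg'), Or.inl ⟨(mem_sdiff.1 hu).2, huW, mem_insert_self _ _⟩⟩
  · obtain ⟨j', hj', hu⟩ := mem_biUnion.1 hu
    obtain ⟨h, hh, rfl⟩ := mem_image.1 (hVs j' ▸ hu)
    have hhM := hEsM j' hj' hh
    refine ⟨W, {g', h}, subset_rfl, by linarith, mem_insert_self _ _, fun x hx => ?_,
      hfreeT card_le_two (insert_subset_iff.2 ⟨hEsM j hj hg', singleton_subset_iff.2 hhM⟩)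
        fun x hx => ?_, Or.inr ⟨h, by simp, rfl⟩⟩
    · rcases mem_insert.1 hx with rfl | hx
      · exact hg'D
      · exact mem_singleton.1 hx ▸ fun hc => huD h hhM hc rfl
    · rcases mem_insert.1 hx with rfl | hx
      · exact hfree j hj x hg'
      · exact mem_singleton.1 hx ▸ hfree j' hj' h hh

lemma freeable_of_reachCond [Fintype V] [Fintype E] [DecidableEq E] [Fintype C] {k α Θ B : ℝ}
    {n : ℕ} (hloop : ∀ e : E, fst e ≠ snd e) (htl : ∀ e : E, tl e = fst e ∨ tl e = snd e)
    (hproper : IsProperColouring fst snd col)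
    (hmult : ∀ u v : V, ((univ.filter fun e : E => endpts fst snd e = {u, v}).card : ℝ) ≤ n / k)
    (hM : IsRainbowMatching fst snd col M) {Es : ℕ → Finset E} {Vs : ℕ → Finset V}
    {Rs : ℕ → Finset C} (hVs : ∀ i, Vs i = (Es i).image (hdOf fst snd tl))
    (hRs : ∀ i, Rs i = (Es i).image col) {i : ℕ}
    (hEsM : ∀ j ∈ Ioo 0 i, Es j ⊆ M) (hR : ∀ j ∈ Ioo 0 i, α * n ≤ ((Rs j).card : ℝ))
    (hfree : ∀ j ∈ Ioo 0 i, ∀ g' ∈ Es j, Freeable fst snd col M tl Θ B {g'}) (hB : 1 ≤ B)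
    (hα : 0 < α) (hnk : 0 ≤ (n : ℝ) / k) (hΘ : Θ + 1 + (2 * Θ + 1) * (n / k) < α ^ 2 * n)
    {g : E} (hg : g ∈ M) (hreach : reachCond fst snd col M Vs Rs α i (tl g)) :
    Freeable fst snd col M tl Θ (3 * B) {g} := by
  intro W D hW hD hgD
  simp only [mem_singleton, forall_eq] at hgD
  obtain ⟨j, hj, hcount⟩ := hreach
  have hS : Θ + 1 + (2 * Θ + 1) * (n / k) < _ :=
    hΘ.trans_le ((by nlinarith [hR j hj] : α ^ 2 * n ≤ α * (Rs j).card).trans hcount)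
  obtain ⟨f, hf, hfD, hfW, hfH⟩ := exists_edge_avoiding hproper hmult hM hnk
    (fun f hf => (mem_filter.1 hf).2.1) (c := col g) (W := W) (D := D) (by linarith) (by linarith)
    hS
  obtain ⟨-, htf, hfR, hu⟩ := mem_filter.1 hf
  obtain ⟨g', hg', hg'f⟩ := mem_image.1 (hRs j ▸ hfR)
  obtain ⟨W', T, hWW', hW', hg'T, hTD, hTfree, hu⟩ := exists_freeable_targets hM hVs hEsM hfree hB
    hj hg' (hg'f ▸ hfD) hu hfW hfH
  have hD' : ((insert (col g) D).card : ℝ) ≤ D.card + 1 := by exact_mod_cast card_insert_le _ _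
  obtain ⟨P, Q, hsw, hP⟩ := hTfree W' (insert (col g) D) (by linarith) (by linarith) hTD
  refine ⟨_, _, hsw.extend hloop htl hM hWW' subset_rfl hg hgD htf (hsw.targets_subset hg'T)
    hg'f.symm (fun q hq => hsw.col_added_ne hq hg'T) hu, ?_⟩
  have := card_insert_le g P
  push_cast [← Nat.cast_le (α := ℝ)] at this
  linarith

end LaterLayers

section Layers

variable {V E C : Type*} [DecidableEq V] [Fintype C] [DecidableEq C] {fst snd : E → V}
  {col : E → C} {M : Finset E} {tl : E → V} {Es : ℕ → Finset E} {Vs : ℕ → Finset V}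
  {Rs : ℕ → Finset C}

lemma layer_subset [Fintype V] [Fintype E] {α : ℝ} (hE1 : Es 1 = E1 fst snd col M α)
    (hEi : ∀ i, 2 ≤ i → ∀ e : E, e ∈ Es i ↔ e ∈ M ∧ (∀ j ∈ Ioo 0 i, e ∉ Es j) ∧
      ∃ v ∈ endpts fst snd e, reachCond fst snd col M Vs Rs α i v) {j : ℕ} (hj : 1 ≤ j) :
    Es j ⊆ M := by
  rcases hj.eq_or_lt with rfl | hj
  · exact hE1 ▸ filter_subset _ _
  · exact fun e he => ((hEi j hj e).1 he).1

lemma mul_le_one_of_layers [Fintype V] [Fintype E] {α : ℝ} {m : ℕ}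
    (hM : IsRainbowMatching fst snd col M) (hEsM : ∀ j, 1 ≤ j → Es j ⊆ M)
    (hEi : ∀ i, 2 ≤ i → ∀ e : E, e ∈ Es i ↔ e ∈ M ∧ (∀ j ∈ Ioo 0 i, e ∉ Es j) ∧
      ∃ v ∈ endpts fst snd e, reachCond fst snd col M Vs Rs α i v)
    {n : ℕ} (hC : Fintype.card C = n) (hn : 0 < n)
    (hbig : ∀ i, 1 ≤ i → i ≤ m → α * n ≤ ((Es i).card : ℝ)) : m * α ≤ 1 := by
  have hdisj : (Icc 1 m : Set ℕ).PairwiseDisjoint Es := by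
    have key (i j : ℕ) (hi : 1 ≤ i) (hij : i < j) : Disjoint (Es i) (Es j) :=
      disjoint_right.2 fun e hej hei =>
        ((hEi j (by omega) e).1 hej).2.1 i (mem_Ioo.2 ⟨by omega, hij⟩) hei
    intro i hi j hj hij
    rcases lt_or_gt_of_ne hij with h | h
    · exact key i j (mem_Icc.1 hi).1 h
    · exact (key j i (mem_Icc.1 hj).1 h).symm
  have hsum : (m : ℝ) * (α * n) ≤ n := by
    have h₁ := card_nsmul_le_sum (Icc 1 m) (fun j => ((Es j).card : ℝ)) _
      fun j hj => hbig j (mem_Icc.1 hj).1 (mem_Icc.1 hj).2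
    have h₂ : ((Icc 1 m).biUnion Es).card ≤ M.card := card_le_card fun e he => by
      obtain ⟨j, hj, hej⟩ := mem_biUnion.1 he
      exact hEsM j (mem_Icc.1 hj).1 hej
    rw [card_biUnion hdisj] at h₂
    simp only [Nat.card_Icc, add_tsub_cancel_right, nsmul_eq_mul] at h₁
    have h₃ : (M.card : ℝ) ≤ n := by exact_mod_cast hC ▸ hM.card_le
    push_cast [← Nat.cast_le (α := ℝ)] at h₂
    linarith
  have hn' : (0 : ℝ) < n := by exact_mod_cast hn
  nlinarith

lemma card_Fcols (hM : IsRainbowMatching fst snd col M) [Fintype E] (α : ℝ) :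
    (Fcols fst snd col M α).card = (E0 fst snd col M α).card :=
  (hM.mono (filter_subset _ _)).card_image_col

lemma freeable_of_mem_layer [Fintype V] [Fintype E] [DecidableEq E] {k α Θ : ℝ} {n m : ℕ}
    (hloop : ∀ e : E, fst e ≠ snd e) (htl : ∀ e : E, tl e = fst e ∨ tl e = snd e)
    (hproper : IsProperColouring fst snd col) (hC : Fintype.card C = n)
    (hmult : ∀ u v : V, ((univ.filter fun e : E => endpts fst snd e = {u, v}).card : ℝ) ≤ n / k)
    (hM : IsRainbowMatching fst snd col M) (hVs : ∀ i, Vs i = (Es i).image (hdOf fst snd tl))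
    (hRs : ∀ i, Rs i = (Es i).image col)
    (htl1 : ∀ e ∈ Es 1,
      α * ((Fcols fst snd col M α).card : ℝ) ≤ (goodDeg fst snd col M α (tl e) : ℝ))
    (htli : ∀ i, 2 ≤ i → ∀ e ∈ Es i, reachCond fst snd col M Vs Rs α i (tl e))
    (hEsM : ∀ j, 1 ≤ j → Es j ⊆ M) (hR : ∀ j, 1 ≤ j → j ≤ m → α * n ≤ ((Rs j).card : ℝ))
    (hF : 5 * (α ^ 2 * n) ≤ α * (Fcols fst snd col M α).card) (hα : 0 < α) (hk : 0 < k)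
    (hC0 : k ≤ ((C0 col M).card : ℝ)) (hΘk : 2 * Θ ≤ α * k / 4)
    (hΘ : Θ + 1 + (2 * Θ + 1) * (n / k) < α ^ 2 * n)
    (hΘ₁ : Θ + 1 + Θ * (n / k) + 8 * Θ * n / (α * k) < 5 * (α ^ 2 * n)) :
    ∀ i, 1 ≤ i → i ≤ m → ∀ g ∈ Es i, Freeable fst snd col M tl Θ (3 ^ i) {g} := by
  intro i
  induction i using Nat.strong_induction_on with
  | _ i ih =>
    intro hi him g hg
    rcases hi.eq_or_lt with rfl | hi
    · exact (freeable_of_goodDeg hloop htl hproper hC hmult hM hα hk hC0 hΘk hΘ₁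
        (hEsM 1 le_rfl hg) (hF.trans (htl1 g hg))).mono (by norm_num)
    · have h3 : (3 : ℝ) ^ i = 3 * 3 ^ (i - 1) := by rw [← pow_succ']; congr 1; omega
      rw [h3]
      refine freeable_of_reachCond hloop htl hproper hmult hM hVs hRs
        (fun j hj => hEsM j (mem_Ioo.1 hj).1)
        (fun j hj => hR j (mem_Ioo.1 hj).1 (by have := (mem_Ioo.1 hj).2; omega))
        (fun j hj g' hg' => (ih j (mem_Ioo.1 hj).2 (mem_Ioo.1 hj).1
          (by have := (mem_Ioo.1 hj).2; omega) g' hg').mono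
          (pow_le_pow_right₀ (by norm_num) (by have := (mem_Ioo.1 hj).2; omega)))
        (one_le_pow₀ (by norm_num)) hα (by positivity) hΘ (hEsM i hi.le hg) (htli i hi g hg)

lemma exists_endpts_notMem_heads [DecidableEq E] (hM : IsRainbowMatching fst snd col M)
    (hMmax : ∀ S : Finset E, IsRainbowMatching fst snd col S → S.card ≤ M.card) {A : Finset E}
    (hA : A ⊆ M) {Θ B : ℝ} (hB : 1 ≤ B) (hΘ : 2 + 9 * B ≤ Θ)
    (hfree : ∀ g ∈ A, Freeable fst snd col M tl Θ B {g}) {e gc : E} (hgc : gc ∈ A)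
    (hcol : col e = col gc) :
    ∃ v ∈ endpts fst snd e, v ∈ mVerts fst snd M ∧ ∀ h ∈ A, hdOf fst snd tl h ≠ v := by
  by_contra! hend
  set T := insert gc (A.filter (hdOf fst snd tl · ∈ endpts fst snd e))
  have hTA : T ⊆ A := insert_subset hgc (filter_subset _ _)
  have hT : (T.card : ℝ) * B ≤ 3 * B := by
    refine mul_le_mul_of_nonneg_right ?_ (by linarith)
    have : (A.filter (hdOf fst snd tl · ∈ endpts fst snd e)).card ≤ 2 :=
      (card_le_card_of_injOn (hdOf fst snd tl) (fun h hh => (mem_filter.1 hh).2)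
        fun a ha b hb hab => hM.eq_of_mem_endpts (hA (mem_filter.1 ha).1) (hA (mem_filter.1 hb).1)
          (hdOf_mem_endpts tl a) (hab ▸ hdOf_mem_endpts tl b)).trans (card_endpts_le_two e)
    exact_mod_cast (card_insert_le _ _).trans (by omega)
  have he : ((endpts fst snd e).card : ℝ) ≤ 2 := by exact_mod_cast card_endpts_le_two e
  obtain ⟨P, Q, hsw, -⟩ := ((Freeable.of_forall_singleton hM hB T (hTA.trans hA)
    fun g hg => hfree g (hTA hg)).mono hT) (endpts fst snd e) ∅ (by linarith) (by simp; linarith)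
    (by simp)
  obtain ⟨S, hS, hcard⟩ := hsw.exists_card_lt hM (mem_insert_self _ _) hcol fun v hv => by
    by_cases hvM : v ∈ mVerts fst snd M
    · obtain ⟨h, hh, rfl⟩ := hend v hv hvM
      exact Or.inr ⟨h, mem_insert_of_mem (mem_filter.2 ⟨hh, hv⟩), rfl⟩
    · exact Or.inl hvM
  exact (hMmax S hS).not_gt hcard

end Layers

theorem stmt14_general
    {V E C : Type*} [Fintype V] [DecidableEq V] [Fintype E]
    [Fintype C] [DecidableEq C]
    (ε k α : ℝ) (hε0 : 0 < ε) (hε1 : ε < 1/1000)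
    (hk : k = (2:ℝ) ^ (20/ε)) (hα : α = ε/12)
    (n : ℕ) (hn : (n:ℝ) > k^2)
    (fst snd : E → V) (col : E → C)
    (hloop : ∀ e : E, fst e ≠ snd e)
    (hproper : ∀ e f : E, e ≠ f → (endpts fst snd e ∩ endpts fst snd f).Nonempty →
      col e ≠ col f)
    (hC : Fintype.card C = n)
    (hmult : ∀ u v : V,
      ((Finset.univ.filter fun e : E => endpts fst snd e = ({u, v} : Finset V)).card : ℝ) ≤ n / k)
    (habund : ∀ c : C, (1+ε) * n ≤ ((Finset.univ.filter fun e : E => col e = c).card : ℝ))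
    (M : Finset E) (hM : IsRainbowMatching fst snd col M)
    (hMmax : ∀ S : Finset E, IsRainbowMatching fst snd col S → S.card ≤ M.card)
    (hMlt : (M.card : ℝ) < n - k)
    (tl : E → V) (htl : ∀ e : E, tl e = fst e ∨ tl e = snd e)
    (Es : ℕ → Finset E) (Vs : ℕ → Finset V) (Rs : ℕ → Finset C)
    (hVs : ∀ i, Vs i = (Es i).image (hdOf fst snd tl))
    (hRs : ∀ i, Rs i = (Es i).image col)
    (hE1 : Es 1 = E1 fst snd col M α)
    (htl1 : ∀ e ∈ Es 1,
      α * ((Fcols fst snd col M α).card : ℝ) ≤ (goodDeg fst snd col M α (tl e) : ℝ))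
    (hEi : ∀ i, 2 ≤ i → ∀ e : E,
      e ∈ Es i ↔ e ∈ M ∧ (∀ j ∈ Finset.Ioo 0 i, e ∉ Es j) ∧
        ∃ v ∈ endpts fst snd e, reachCond fst snd col M Vs Rs α i v)
    (htli : ∀ i, 2 ≤ i → ∀ e ∈ Es i, reachCond fst snd col M Vs Rs α i (tl e))
    (m : ℕ)
    (hbig : ∀ i, 1 ≤ i → i ≤ m → α * n ≤ ((Es i).card : ℝ))
    :
    ∀ e : E, col e ∈ (Finset.Icc 1 m).biUnion Rs →
      (endpts fst snd e ∩
        (twins fst snd M ((Finset.Icc 1 m).biUnion Vs) ∪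
          (mVerts fst snd M \ (Finset.Icc 1 m).biUnion Vs))).Nonempty     := by
  obtain ⟨hα0, hk0, hn0, hΘk, hΘ, hΘ₁⟩ := param_bounds hε0 hε1 hk hα hn
  have hEsM : ∀ j, 1 ≤ j → Es j ⊆ M := fun j hj => layer_subset hE1 hEi hj
  have hC0 : k ≤ ((C0 col M).card : ℝ) := by rw [hM.card_C0, hC]; linarith
  have hF : 5 * (α ^ 2 * n) ≤ α * (Fcols fst snd col M α).card := by
    rw [card_Fcols hM]
    nlinarith [card_E0_ge hloop hproper hC habund hM hMmax hMlt (by rw [hα]; ring) hα0 hk0.le]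
  have hfree := freeable_of_mem_layer hloop htl hproper hC hmult hM hVs hRs htl1 htli hEsM
    (fun j hj hjm => hRs j ▸ (hM.mono (hEsM j hj)).card_image_col ▸ hbig j hj hjm) hF hα0 hk0 hC0
    hΘk hΘ hΘ₁
  intro e he
  obtain ⟨i, hi, hcol⟩ := mem_biUnion.1 he
  obtain ⟨gc, hgc, hgce⟩ := mem_image.1 (hRs i ▸ hcol)
  obtain ⟨v, hv, hvM, hvh⟩ := exists_endpts_notMem_heads hM hMmax
    (biUnion_subset.2 fun j hj => hEsM j (mem_Icc.1 hj).1) (one_le_pow₀ (by norm_num))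
    (two_add_nine_mul_three_pow_le hε0 hε1 hk hα (mul_le_one_of_layers hM hEsM hEi hC hn0 hbig))
    (fun g hg => by
      obtain ⟨j, hj, hg⟩ := mem_biUnion.1 hg
      exact (hfree j (mem_Icc.1 hj).1 (mem_Icc.1 hj).2 g hg).mono
        (pow_le_pow_right₀ (by norm_num) (mem_Icc.1 hj).2))
    (mem_biUnion.2 ⟨i, hi, hgc⟩) hgce.symm
  refine ⟨v, mem_inter.2 ⟨hv, mem_union_right _ (mem_sdiff.2 ⟨hvM, fun hvR => ?_⟩)⟩⟩
  obtain ⟨j, hj, hvj⟩ := mem_biUnion.1 hvR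
  obtain ⟨h, hh, rfl⟩ := mem_image.1 (hVs j ▸ hvj)
  exact hvh h (mem_biUnion.2 ⟨j, hj, hh⟩) rfl

/-- Every `R`-edge has an endpoint in `T(V_reach) ∪ (V(M) ∖ V_reach)`. -/
theorem stmt14
    {V E C : Type*} [Fintype V] [DecidableEq V] [Fintype E] [DecidableEq E]
    [Fintype C] [DecidableEq C]
    (ε k α : ℝ) (hε0 : 0 < ε) (hε1 : ε < 1/1000)
    (hk : k = (2:ℝ) ^ (20/ε)) (hα : α = ε/12)
    (n : ℕ) (hn : (n:ℝ) > k^2)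
    (fst snd : E → V) (col : E → C)
    (hloop : ∀ e : E, fst e ≠ snd e)
    (hproper : ∀ e f : E, e ≠ f → (endpts fst snd e ∩ endpts fst snd f).Nonempty →
      col e ≠ col f)
    (hC : Fintype.card C = n)
    (hmult : ∀ u v : V,
      ((Finset.univ.filter fun e : E => endpts fst snd e = ({u, v} : Finset V)).card : ℝ) ≤ n / k)
    (habund : ∀ c : C, (1+ε) * n ≤ ((Finset.univ.filter fun e : E => col e = c).card : ℝ))
    (M : Finset E) (hM : IsRainbowMatching fst snd col M)
    (hMmax : ∀ S : Finset E, IsRainbowMatching fst snd col S → S.card ≤ M.card)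
    (hMlt : (M.card : ℝ) < n - k)
    (tl : E → V) (htl : ∀ e : E, tl e = fst e ∨ tl e = snd e)
    (Es : ℕ → Finset E) (Vs : ℕ → Finset V) (Rs : ℕ → Finset C)
    (hVs : ∀ i, Vs i = (Es i).image (hdOf fst snd tl))
    (hRs : ∀ i, Rs i = (Es i).image col)
    (hE1 : Es 1 = E1 fst snd col M α)
    (htl1 : ∀ e ∈ Es 1,
      α * ((Fcols fst snd col M α).card : ℝ) ≤ (goodDeg fst snd col M α (tl e) : ℝ))
    (hEi : ∀ i, 2 ≤ i → ∀ e : E,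
      e ∈ Es i ↔ e ∈ M ∧ (∀ j ∈ Finset.Ioo 0 i, e ∉ Es j) ∧
        ∃ v ∈ endpts fst snd e, reachCond fst snd col M Vs Rs α i v)
    (htli : ∀ i, 2 ≤ i → ∀ e ∈ Es i, reachCond fst snd col M Vs Rs α i (tl e))
    (m : ℕ) (hm1 : 1 ≤ m)
    (hbig : ∀ i, 1 ≤ i → i ≤ m → α * n ≤ ((Es i).card : ℝ))
    (hstop : ((Es (m+1)).card : ℝ) < α * n)
    :
    ∀ e : E, col e ∈ (Finset.Icc 1 m).biUnion Rs →
      (endpts fst snd e ∩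
        (twins fst snd M ((Finset.Icc 1 m).biUnion Vs) ∪
          (mVerts fst snd M \ (Finset.Icc 1 m).biUnion Vs))).Nonempty :=
  stmt14_general ε k α hε0 hε1 hk hα n hn fst snd col hloop hproper hC hmult habund M hM hMmax hMlt
    tl htl Es Vs Rs hVs hRs hE1 htl1 hEi htli m hbig
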